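/- arXiv:2001.09591 — 2 statements merged into one kernel-verified Lean document; each statement's English description precedes it below -/
import Mathlib

section
/- Let Σ₁ and Σ₂ be disjoint finite alphabets and f : Σ₁ → Σ₂ a bijection, extended to a monoid homomorphism f : Σ₁* → Σ₂*. If L ⊆ Σ₁* is an EDT0L language, then the doubled language L_D = {w f(w) : w ∈ L} ⊆ (Σ₁ ∪ Σ₂)* is EDT0L. -/
open scoped Classical

namespace EqHyp

variable {G : Type} [Group G]

/-- The word length of `g` with respect to the generating set `S`. -/
noncomputable def wordLen (S : Set G) (g : G) : ℕ :=
  sInf {n | ∃ w : List G, (∀ x ∈ w, x ∈ S) ∧ w.prod = g ∧ w.length = n}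

/-- `S` is a finite symmetric generating set of `G`. -/
def SymmGen (S : Set G) : Prop :=
  S.Finite ∧ (∀ s ∈ S, s⁻¹ ∈ S) ∧ Subgroup.closure S = ⊤

/-- A geodesic word over `S`. -/
def IsGeodesicWord (S : Set G) (w : List G) : Prop :=
  (∀ x ∈ w, x ∈ S) ∧ w.length = wordLen S w.prod

/-- Distance in the Cayley graph of `(G, S)`. -/
noncomputable def dCay (S : Set G) (x y : G) : ℕ := wordLen S (x⁻¹ * y)

/-- Every geodesic triangle in the Cayley graph of `(G,S)` is `δ`-slim: every
vertex on one side is within `δ` of a vertex on one of the other two sides. -/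
def SlimTriangles (S : Set G) (δ : ℕ) : Prop :=
  ∀ w₁ w₂ w₃ : List G,
    IsGeodesicWord S w₁ → IsGeodesicWord S w₂ → IsGeodesicWord S w₃ →
    w₁.prod * w₂.prod * w₃.prod = 1 →
    ∀ i ≤ w₁.length, ∃ j,
      (j ≤ w₂.length ∧
        dCay S ((w₁.take i).prod) (w₁.prod * (w₂.take j).prod) ≤ δ) ∨
      (j ≤ w₃.length ∧
        dCay S ((w₁.take i).prod) (w₁.prod * w₂.prod * (w₃.take j).prod) ≤ δ)

/-- `(G,S)` is hyperbolic. -/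
def IsHyperbolic (S : Set G) : Prop := ∃ δ : ℕ, SlimTriangles S δ

/-- A `(G,S,lam,mu)`-quasigeodesic word: a word over `S` all of whose subwords `q`
satisfy `|q| ≤ lam * |π q|_S + mu`. -/
def IsQGWord (S : Set G) (lam mu : ℝ) (w : List G) : Prop :=
  (∀ x ∈ w, x ∈ S) ∧
  ∀ p q s : List G, w = p ++ q ++ s →
    (q.length : ℝ) ≤ lam * (wordLen S q.prod : ℝ) + mu

/-- Projection of a word over the alphabet `S` (as a subtype) to `G`. -/
def proj (S : Set G) (w : List ↥S) : G := (w.map Subtype.val).prod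

/-- Shortlex order on words induced by the order `lt` on letters. -/
def ShortLexLt (lt : G → G → Prop) (u v : List G) : Prop :=
  u.length < v.length ∨ (u.length = v.length ∧ List.Lex lt u v)

/-- `w` is the shortlex representative (over `S`, with respect to `lt`)
of the group element it represents. -/
def IsShortLexRep (S : Set G) (lt : G → G → Prop) (w : List G) : Prop :=
  (∀ x ∈ w, x ∈ S) ∧
  ∀ v : List G, (∀ x ∈ v, x ∈ S) → v.prod = w.prod → ¬ ShortLexLt lt v w

/-- A rational subset of `G`: the image under `proj` of a regular language over `S`. -/
def IsRationalSubset (S : Set G) (R : Set G) : Prop :=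
  ∃ Lt : Language ↥S, Lt.IsRegular ∧ proj S '' Lt = R

/-- A quasi-isometrically embeddable rational subset of `G`. -/
def IsQier (S : Set G) (R : Set G) : Prop :=
  ∃ (lam mu : ℝ) (Lt : Language ↥S), 1 ≤ lam ∧ 0 ≤ mu ∧ Lt.IsRegular ∧
    proj S '' Lt = R ∧
    ∀ w ∈ Lt, ((w : List ↥S).length : ℝ) / lam - mu ≤ (wordLen S (proj S w) : ℝ)

/-! ### E(D)T0L languages -/

/-- A table over the alphabet `C`: a finite set of rules with at least one rule per letter. -/
def IsTable {C : Type} (t : Set (C × List C)) : Prop :=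
  t.Finite ∧ ∀ c : C, ∃ v, (c, v) ∈ t

/-- A deterministic table: exactly one rule per letter. -/
def IsDetTable {C : Type} (t : Set (C × List C)) : Prop :=
  ∀ c : C, ∃! v, (c, v) ∈ t

/-- One rewriting step: every letter of `u` is replaced by a right-hand side of a rule of `t`. -/
def TableStep {C : Type} (t : Set (C × List C)) (u v : List C) : Prop :=
  ∃ vs : List (List C), List.Forall₂ (fun c x => (c, x) ∈ t) u vs ∧ v = vs.flatten

/-- Rewriting along a sequence of tables. -/
def DerivesFrom {C : Type} : List (Set (C × List C)) → List C → List C → Prop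
  | [] => fun u v => u = v
  | t :: ts => fun u v => ∃ w, TableStep t u w ∧ DerivesFrom ts w v

/-- `L ⊆ A*` is ET0L: generated from a seed word over a finite extended alphabet `C ⊇ A`
by sequences of tables spelling words of a regular control language. -/
def IsET0L {A : Type} (L : Language A) : Prop :=
  ∃ (C : Type) (_ : Finite C) (emb : A ↪ C) (ι : Type) (_ : Finite ι)
    (tab : ι → Set (C × List C)),
      (∀ i, IsTable (tab i)) ∧
      ∃ control : Language ι, control.IsRegular ∧
        ∃ seed : List C,
          L = {w : List A | ∃ r ∈ control, DerivesFrom (r.map tab) seed (w.map emb)}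

/-- `L ⊆ A*` is EDT0L: as `IsET0L`, with all tables deterministic. -/
def IsEDT0L {A : Type} (L : Language A) : Prop :=
  ∃ (C : Type) (_ : Finite C) (emb : A ↪ C) (ι : Type) (_ : Finite ι)
    (tab : ι → Set (C × List C)),
      (∀ i, IsTable (tab i) ∧ IsDetTable (tab i)) ∧
      ∃ control : Language ι, control.IsRegular ∧
        ∃ seed : List C,
          L = {w : List A | ∃ r ∈ control, DerivesFrom (r.map tab) seed (w.map emb)}

/-! ### Systems of equations and inequations -/

/-- Evaluation of a letter of an equation: a signed variable or a constant. -/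
def evalLetter {r : ℕ} (g : Fin r → G) : (Fin r × Bool) ⊕ G → G
  | Sum.inl (i, b) => if b then g i else (g i)⁻¹
  | Sum.inr a => a

/-- A system of equations and inequations over `G` in `r` variables,
with a constraint set for each variable. -/
structure EqSystem (G : Type) [Group G] (r : ℕ) where
  eqns : List (List ((Fin r × Bool) ⊕ G))
  ineqns : List (List ((Fin r × Bool) ⊕ G))
  constraint : Fin r → Set G

/-- The size of a system: the total length of its equations and inequations. -/
def EqSystem.size {r : ℕ} (Φ : EqSystem G r) : ℕ :=
  ((Φ.eqns ++ Φ.ineqns).map List.length).sum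

/-- A tuple solves the system. -/
def EqSystem.Solves {r : ℕ} (Φ : EqSystem G r) (g : Fin r → G) : Prop :=
  (∀ e ∈ Φ.eqns, (e.map (evalLetter g)).prod = 1) ∧
  (∀ e ∈ Φ.ineqns, (e.map (evalLetter g)).prod ≠ 1) ∧
  (∀ i, g i ∈ Φ.constraint i)

/-- The set of group-element solutions of `Φ`. -/
def EqSystem.SolSet {r : ℕ} (Φ : EqSystem G r) : Set (Fin r → G) := {g | Φ.Solves g}

/-- `w₁ # w₂ # … # w_r`, encoded over the alphabet `Option A`, with `#` = `none`. -/
def joinHash {A : Type} {r : ℕ} (ws : Fin r → List A) : List (Option A) :=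
  (List.intersperse [none] (List.ofFn fun i => (ws i).map some)).flatten

/-- The full set of solutions of `Φ`, written as tuples of shortlex representatives
over `S` separated by `#`. -/
def ShortLexSolLang (S : Set G) (lt : G → G → Prop) {r : ℕ} (Φ : EqSystem G r) :
    Language (Option ↥S) :=
  {u | ∃ ws : Fin r → List ↥S,
    (∀ i, IsShortLexRep S lt ((ws i).map Subtype.val)) ∧
    Φ.Solves (fun i => proj S (ws i)) ∧
    u = joinHash ws}

/-- The full set of `T`-solutions of `Φ`: tuples of words of `T` separated by `#`. -/
def TSolLang (S : Set G) (T : Language ↥S) {r : ℕ} (Φ : EqSystem G r) :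
    Language (Option ↥S) :=
  {u | ∃ ws : Fin r → List ↥S,
    (∀ i, ws i ∈ T) ∧
    Φ.Solves (fun i => proj S (ws i)) ∧
    u = joinHash ws}


section Doubling

variable {C : Type}

/-- Double a table: act on two disjoint copies of the alphabet. -/
def dTab (t : Set (C × List C)) : Set ((C ⊕ C) × List (C ⊕ C)) :=
  (fun p : C × List C => (Sum.inl p.1, p.2.map Sum.inl)) '' t ∪
  (fun p : C × List C => (Sum.inr p.1, p.2.map Sum.inr)) '' t

lemma mem_dTab_inl {t : Set (C × List C)} {c : C} {x : List (C ⊕ C)} :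
    (Sum.inl c, x) ∈ dTab t ↔ ∃ v, (c, v) ∈ t ∧ x = v.map Sum.inl := by
  constructor
  · rintro (⟨⟨c', v⟩, hv, h⟩ | ⟨⟨c', v⟩, hv, h⟩) <;>
      simp only [Prod.mk.injEq] at h
    · obtain ⟨h1, h2⟩ := h
      cases Sum.inl_injective h1
      exact ⟨v, hv, h2.symm⟩
    · exact absurd h.1 (by simp)
  · rintro ⟨v, hv, rfl⟩
    exact Or.inl ⟨(c, v), hv, rfl⟩

lemma mem_dTab_inr {t : Set (C × List C)} {c : C} {x : List (C ⊕ C)} :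
    (Sum.inr c, x) ∈ dTab t ↔ ∃ v, (c, v) ∈ t ∧ x = v.map Sum.inr := by
  constructor
  · rintro (⟨⟨c', v⟩, hv, h⟩ | ⟨⟨c', v⟩, hv, h⟩) <;>
      simp only [Prod.mk.injEq] at h
    · exact absurd h.1 (by simp)
    · obtain ⟨h1, h2⟩ := h
      cases Sum.inr_injective h1
      exact ⟨v, hv, h2.symm⟩
  · rintro ⟨v, hv, rfl⟩
    exact Or.inr ⟨(c, v), hv, rfl⟩

lemma dTab_isTable {t : Set (C × List C)} (h : IsTable t) : IsTable (dTab t) := by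
  refine ⟨(h.1.image _).union (h.1.image _), ?_⟩
  rintro (c | c)
  · obtain ⟨v, hv⟩ := h.2 c
    exact ⟨v.map Sum.inl, mem_dTab_inl.2 ⟨v, hv, rfl⟩⟩
  · obtain ⟨v, hv⟩ := h.2 c
    exact ⟨v.map Sum.inr, mem_dTab_inr.2 ⟨v, hv, rfl⟩⟩

lemma dTab_isDet {t : Set (C × List C)} (h : IsDetTable t) : IsDetTable (dTab t) := by
  rintro (c | c)
  · obtain ⟨v, hv, huniq⟩ := h c
    refine ⟨v.map Sum.inl, mem_dTab_inl.2 ⟨v, hv, rfl⟩, ?_⟩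
    rintro x hx
    obtain ⟨w, hw, rfl⟩ := mem_dTab_inl.1 hx
    rw [huniq w hw]
  · obtain ⟨v, hv, huniq⟩ := h c
    refine ⟨v.map Sum.inr, mem_dTab_inr.2 ⟨v, hv, rfl⟩, ?_⟩
    rintro x hx
    obtain ⟨w, hw, rfl⟩ := mem_dTab_inr.1 hx
    rw [huniq w hw]

lemma tableStep_double {t : Set (C × List C)} {u u' v v' : List C}
    (h : TableStep t u v) (h' : TableStep t u' v') :
    TableStep (dTab t) (u.map Sum.inl ++ u'.map Sum.inr)
      (v.map Sum.inl ++ v'.map Sum.inr) := by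
  obtain ⟨vs, hvs, rfl⟩ := h
  obtain ⟨vs', hvs', rfl⟩ := h'
  refine ⟨vs.map (List.map Sum.inl) ++ vs'.map (List.map Sum.inr), ?_, ?_⟩
  · refine List.rel_append ?_ ?_
    · rw [List.forall₂_map_left_iff, List.forall₂_map_right_iff]
      exact hvs.imp fun _ _ hcv => mem_dTab_inl.2 ⟨_, hcv, rfl⟩
    · rw [List.forall₂_map_left_iff, List.forall₂_map_right_iff]
      exact hvs'.imp fun _ _ hcv => mem_dTab_inr.2 ⟨_, hcv, rfl⟩
  · simp [List.map_flatten]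

lemma forall₂_dTab_inl {t : Set (C × List C)} :
    ∀ {u : List C} {vs : List (List (C ⊕ C))},
    List.Forall₂ (fun c x => ((Sum.inl c : C ⊕ C), x) ∈ dTab t) u vs →
    ∃ ws : List (List C), vs = ws.map (List.map Sum.inl) ∧
      List.Forall₂ (fun c w => (c, w) ∈ t) u ws := by
  intro u vs h
  induction h with
  | nil => exact ⟨[], rfl, List.Forall₂.nil⟩
  | @cons c x u vs hcx _ ih =>
    obtain ⟨ws, rfl, hws⟩ := ih
    obtain ⟨w, hw, rfl⟩ := mem_dTab_inl.1 hcx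
    exact ⟨w :: ws, rfl, List.Forall₂.cons hw hws⟩

lemma forall₂_dTab_inr {t : Set (C × List C)} :
    ∀ {u : List C} {vs : List (List (C ⊕ C))},
    List.Forall₂ (fun c x => ((Sum.inr c : C ⊕ C), x) ∈ dTab t) u vs →
    ∃ ws : List (List C), vs = ws.map (List.map Sum.inr) ∧
      List.Forall₂ (fun c w => (c, w) ∈ t) u ws := by
  intro u vs h
  induction h with
  | nil => exact ⟨[], rfl, List.Forall₂.nil⟩
  | @cons c x u vs hcx _ ih =>
    obtain ⟨ws, rfl, hws⟩ := ih
    obtain ⟨w, hw, rfl⟩ := mem_dTab_inr.1 hcx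
    exact ⟨w :: ws, rfl, List.Forall₂.cons hw hws⟩

lemma forall₂_append_split {α β : Type} {R : α → β → Prop} :
    ∀ {u₁ u₂ : List α} {l : List β}, List.Forall₂ R (u₁ ++ u₂) l →
    ∃ l₁ l₂, l = l₁ ++ l₂ ∧ List.Forall₂ R u₁ l₁ ∧ List.Forall₂ R u₂ l₂ := by
  intro u₁
  induction u₁ with
  | nil => exact fun h => ⟨[], _, rfl, List.Forall₂.nil, h⟩
  | cons a u₁ ih =>
    intro u₂ l h
    rcases h with _ | ⟨hab, h⟩
    obtain ⟨l₁, l₂, rfl, h₁, h₂⟩ := ih h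
    exact ⟨_ :: l₁, l₂, rfl, List.Forall₂.cons hab h₁, h₂⟩

lemma tableStep_double_inv {t : Set (C × List C)} {u u' : List C} {x : List (C ⊕ C)}
    (h : TableStep (dTab t) (u.map Sum.inl ++ u'.map Sum.inr) x) :
    ∃ v v', x = v.map Sum.inl ++ v'.map Sum.inr ∧ TableStep t u v ∧ TableStep t u' v' := by
  obtain ⟨vs, hvs, rfl⟩ := h
  obtain ⟨l₁, l₂, rfl, h₁, h₂⟩ := forall₂_append_split hvs
  rw [List.forall₂_map_left_iff] at h₁ h₂
  obtain ⟨ws₁, rfl, hw₁⟩ := forall₂_dTab_inl h₁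
  obtain ⟨ws₂, rfl, hw₂⟩ := forall₂_dTab_inr h₂
  refine ⟨ws₁.flatten, ws₂.flatten, ?_, ⟨ws₁, hw₁, rfl⟩, ⟨ws₂, hw₂, rfl⟩⟩
  simp [List.map_flatten]

lemma derives_double {r : List (Set (C × List C))} :
    ∀ {u u' v v' : List C}, DerivesFrom r u v → DerivesFrom r u' v' →
    DerivesFrom (r.map dTab) (u.map Sum.inl ++ u'.map Sum.inr)
      (v.map Sum.inl ++ v'.map Sum.inr) := by
  induction r with
  | nil =>
    rintro u u' v v' rfl rfl
    rfl
  | cons t r ih =>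
    rintro u u' v v' ⟨w, hw, hwv⟩ ⟨w', hw', hwv'⟩
    exact ⟨_, tableStep_double hw hw', ih hwv hwv'⟩

lemma derives_double_inv {r : List (Set (C × List C))} :
    ∀ {u u' : List C} {x : List (C ⊕ C)},
    DerivesFrom (r.map dTab) (u.map Sum.inl ++ u'.map Sum.inr) x →
    ∃ v v', x = v.map Sum.inl ++ v'.map Sum.inr ∧ DerivesFrom r u v ∧ DerivesFrom r u' v' := by
  induction r with
  | nil =>
    rintro u u' x rfl
    exact ⟨u, u', rfl, rfl, rfl⟩
  | cons t r ih =>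
    rintro u u' x ⟨w, hw, hwx⟩
    obtain ⟨v, v', rfl, h₁, h₂⟩ := tableStep_double_inv hw
    obtain ⟨z, z', rfl, hz, hz'⟩ := ih hwx
    exact ⟨z, z', rfl, ⟨v, h₁, hz⟩, ⟨v', h₂, hz'⟩⟩

lemma tableStep_det {t : Set (C × List C)} (ht : IsDetTable t) :
    ∀ {u v₁ v₂ : List C}, TableStep t u v₁ → TableStep t u v₂ → v₁ = v₂ := by
  have key : ∀ {u : List C} {vs₁ vs₂ : List (List C)},
      List.Forall₂ (fun c x => (c, x) ∈ t) u vs₁ →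
      List.Forall₂ (fun c x => (c, x) ∈ t) u vs₂ → vs₁ = vs₂ := by
    intro u
    induction u with
    | nil =>
      intro vs₁ vs₂ h₁ h₂
      rw [List.forall₂_nil_left_iff] at h₁ h₂; rw [h₁, h₂]
    | cons c u ih =>
      intro vs₁ vs₂ h₁ h₂
      rcases h₁ with _ | ⟨hx₁, h₁⟩
      rcases h₂ with _ | ⟨hx₂, h₂⟩
      obtain ⟨v, _, huniq⟩ := ht c
      rw [huniq _ hx₁, huniq _ hx₂, ih h₁ h₂]
  rintro u v₁ v₂ ⟨vs₁, h₁, rfl⟩ ⟨vs₂, h₂, rfl⟩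
  rw [key h₁ h₂]

lemma derives_det : ∀ {r : List (Set (C × List C))},
    (∀ t ∈ r, IsDetTable t) → ∀ {u v₁ v₂ : List C},
    DerivesFrom r u v₁ → DerivesFrom r u v₂ → v₁ = v₂ := by
  intro r
  induction r with
  | nil => rintro _ u v₁ v₂ rfl rfl; rfl
  | cons t r ih =>
    rintro hdet u v₁ v₂ ⟨w₁, hw₁, h₁⟩ ⟨w₂, hw₂, h₂⟩
    have := tableStep_det (hdet t (by simp)) hw₁ hw₂
    subst this
    exact ih (fun t ht => hdet t (by simp [ht])) h₁ h₂

lemma map_eq_map_inr_split {A B D : Type} {g : A → D} {h : B → D} :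
    ∀ {u : List (A ⊕ B)} {v : List D}, u.map (Sum.map g h) = v.map Sum.inr →
    ∃ b : List B, u = b.map Sum.inr ∧ b.map h = v := by
  intro u
  induction u with
  | nil =>
    intro v hv
    rw [List.map_nil] at hv
    obtain rfl := (List.map_eq_nil_iff.1 hv.symm)
    exact ⟨[], rfl, rfl⟩
  | cons x u ih =>
    intro v hv
    cases v with
    | nil => simp at hv
    | cons d v =>
      simp only [List.map_cons, List.cons.injEq] at hv
      obtain ⟨hx, hu⟩ := hv
      cases x with
      | inl a => simp [Sum.map_inl] at hx
      | inr b =>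
        obtain ⟨b', rfl, rfl⟩ := ih hu
        simp only [Sum.map_inr, Sum.inr.injEq] at hx
        exact ⟨b :: b', rfl, by simp [hx]⟩

lemma map_eq_double_split {A B D : Type} {g : A → D} {h : B → D} :
    ∀ {u : List (A ⊕ B)} {v v' : List D},
    u.map (Sum.map g h) = v.map Sum.inl ++ v'.map Sum.inr →
    ∃ (a : List A) (b : List B), u = a.map Sum.inl ++ b.map Sum.inr ∧ a.map g = v ∧ b.map h = v' := by
  intro u
  induction u with
  | nil =>
    intro v v' hv
    rw [List.map_nil] at hv
    obtain ⟨h1, h2⟩ := List.append_eq_nil_iff.1 hv.symm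
    obtain rfl := List.map_eq_nil_iff.1 h1
    obtain rfl := List.map_eq_nil_iff.1 h2
    exact ⟨[], [], rfl, rfl, rfl⟩
  | cons x u ih =>
    intro v v' hv
    cases v with
    | nil =>
      rw [List.map_nil, List.nil_append] at hv
      obtain ⟨b, hb, rfl⟩ := map_eq_map_inr_split hv
      exact ⟨[], b, by simpa using hb, rfl, rfl⟩
    | cons d v =>
      simp only [List.map_cons, List.cons_append, List.cons.injEq] at hv
      obtain ⟨hx, hu⟩ := hv
      cases x with
      | inr b => simp [Sum.map_inr] at hx
      | inl a =>
        obtain ⟨a', b', rfl, rfl, rfl⟩ := ih hu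
        simp only [Sum.map_inl, Sum.inl.injEq] at hx
        exact ⟨a :: a', b', rfl, by simp [hx], rfl⟩

end Doubling

/-- (Doubling.) If `Σ₁, Σ₂` are disjoint alphabets (modelled
as the two summands of `Σ₁ ⊕ Σ₂`), `f : Σ₁ → Σ₂` a bijection extended to words,
and `L ⊆ Σ₁*` is EDT0L, then `L_D = { w f(w) : w ∈ L }` is EDT0L. -/
theorem doubling_EDT0L {A B : Type} (f : A ≃ B) (L : Language A)
    (hL : IsEDT0L L) :
    IsEDT0L {u : List (A ⊕ B) |
      ∃ w ∈ L, u = w.map Sum.inl ++ w.map (fun a => Sum.inr (f a))} := by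
  obtain ⟨C, _, emb, ι, _, tab, htab, control, hcontrol, seed, hLeq⟩ := hL
  refine ⟨C ⊕ C, inferInstance,
    ⟨Sum.map emb (emb ∘ f.symm), emb.injective.sumMap (emb.injective.comp f.symm.injective)⟩,
    ι, inferInstance, fun i => dTab (tab i),
    fun i => ⟨dTab_isTable (htab i).1, dTab_isDet (htab i).2⟩,
    control, hcontrol, seed.map Sum.inl ++ seed.map Sum.inr, ?_⟩
  ext u
  simp only [Set.mem_setOf_eq, Function.Embedding.coeFn_mk]
  constructor
  · rintro ⟨w, hw, rfl⟩
    rw [hLeq] at hw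
    obtain ⟨r, hr, hd⟩ := hw
    refine ⟨r, hr, ?_⟩
    have hmap : (w.map Sum.inl ++ w.map fun a => Sum.inr (f a)).map (Sum.map emb (emb ∘ f.symm))
        = (w.map emb).map Sum.inl ++ (w.map emb).map Sum.inr := by
      simp [List.map_map, Function.comp_def]
    rw [hmap]
    have hmm : List.map (fun i => dTab (tab i)) r = List.map dTab (List.map tab r) := by
      rw [List.map_map]; rfl
    rw [hmm]
    exact derives_double hd hd
  · rintro ⟨r, hr, hd⟩
    have hmm : List.map (fun i => dTab (tab i)) r = List.map dTab (List.map tab r) := by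
      rw [List.map_map]; rfl
    rw [hmm] at hd
    obtain ⟨v, v', heq, h₁, h₂⟩ := derives_double_inv hd
    have hdet : ∀ t ∈ r.map tab, IsDetTable t := by
      rintro t ht
      obtain ⟨i, _, rfl⟩ := List.mem_map.1 ht
      exact (htab i).2
    obtain rfl : v = v' := derives_det hdet h₁ h₂
    obtain ⟨a, b, rfl, ha, hb⟩ := map_eq_double_split heq
    have hab : b.map f.symm = a := by
      apply List.map_injective_iff.2 emb.injective
      rw [ha, List.map_map]
      exact hb
    refine ⟨a, ?_, ?_⟩
    · rw [hLeq]
      exact ⟨r, hr, by rw [ha]; exact h₁⟩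
    · subst hab
      congr 1
      rw [List.map_map]
      congr 1
      ext x
      simp

end EqHyp
end

section
/- Let Σ be an alphabet with # ∉ Σ and let 1 ≤ k ≤ ℓ. Let r ≥ 0 and suppose L ⊆ (Σ*)_{#r}, i.e. every word of L has the form u₁#…#u_r with u_i ∈ Σ*. Define L_{k,ℓ} = {u_k#…#u_ℓ : u₁#…#u_r ∈ L} if ℓ ≤ r, and L_{k,ℓ} = ∅ otherwise. If L is ET0L then L_{k,ℓ} is ET0L, and if L is EDT0L then L_{k,ℓ} is EDT0L. -/
open scoped Classical

namespace EqHyp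

variable {G : Type} [Group G]

/-- The word `u₁#…#u_r` over `Option A` for a list of words `ws = [u₁,…,u_r]`,
with `#` = `none`. -/
def joinHashL {A : Type} (ws : List (List A)) : List (Option A) :=
  (List.intersperse [none] (ws.map (fun u => u.map some))).flatten

/-- The language `L_{k,ℓ}` of factors `u_k#…#u_ℓ` of the words
`u₁#…#u_r` of `L` (1-based indices), empty if `ℓ > r`. -/
def factorLang {A : Type} (r k l : ℕ) (L : Language (Option A)) :
    Language (Option A) :=
  if l ≤ r then
    {v | ∃ ws : List (List A), ws.length = r ∧ joinHashL ws ∈ L ∧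
      v = joinHashL ((ws.drop (k - 1)).take (l - k + 1))}
  else
    {v | False}

/-! ### Auxiliary machinery for the proof of Statement 14 -/

section FactorAux

/-- Graph of a function as a (deterministic) table. -/
def graphT {X : Type} (f : X → List X) : Set (X × List X) := {p | p.2 = f p.1}

theorem mem_graphT {X : Type} (f : X → List X) (c : X) (v : List X) :
    (c, v) ∈ graphT f ↔ v = f c := Iff.rfl

theorem isTable_graphT {X : Type} [Finite X] (f : X → List X) : IsTable (graphT f) := by
  constructor
  · have : graphT f = Set.range (fun x => (x, f x)) := by
      ext ⟨c, v⟩; simp [graphT, eq_comm]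
    rw [this]; exact Set.finite_range _
  · exact fun c => ⟨f c, rfl⟩

theorem isDetTable_graphT {X : Type} (f : X → List X) : IsDetTable (graphT f) :=
  fun c => ⟨f c, rfl, fun v hv => hv⟩

theorem tableStep_nil {X : Type} (t : Set (X × List X)) (v : List X) :
    TableStep t [] v ↔ v = [] := by
  constructor
  · rintro ⟨vs, h1, rfl⟩; cases h1; rfl
  · rintro rfl; exact ⟨[], List.Forall₂.nil, rfl⟩

theorem tableStep_cons {X : Type} {t : Set (X × List X)} {c : X} {x : List X} {u v : List X}
    (hc : (c, x) ∈ t) (h : TableStep t u v) : TableStep t (c :: u) (x ++ v) := by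
  obtain ⟨vs, h1, rfl⟩ := h
  exact ⟨x :: vs, List.Forall₂.cons hc h1, by simp⟩

theorem tableStep_cons_inv {X : Type} {t : Set (X × List X)} {c : X} {u v : List X}
    (h : TableStep t (c :: u) v) :
    ∃ x v₂, (c, x) ∈ t ∧ TableStep t u v₂ ∧ v = x ++ v₂ := by
  obtain ⟨vs, h1, rfl⟩ := h
  cases h1 with
  | cons hc htl => exact ⟨_, _, hc, ⟨_, htl, rfl⟩, by simp⟩

theorem tableStep_mono {X : Type} {t t' : Set (X × List X)} (hsub : t ⊆ t') {u v : List X}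
    (h : TableStep t u v) : TableStep t' u v := by
  obtain ⟨vs, h1, rfl⟩ := h
  exact ⟨vs, h1.imp (fun _ _ hab => hsub hab), rfl⟩

theorem tableStep_graphT {X : Type} (f : X → List X) (u v : List X) :
    TableStep (graphT f) u v ↔ v = (u.map f).flatten := by
  constructor
  · rintro ⟨vs, h1, rfl⟩
    congr 1
    induction h1 with
    | nil => rfl
    | cons h _ ih => simp_all [graphT]
  · rintro rfl
    refine ⟨u.map f, ?_, rfl⟩
    induction u with
    | nil => simp
    | cons c u ih => exact List.Forall₂.cons rfl ih

theorem derivesFrom_nil {X : Type} (u v : List X) :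
    DerivesFrom ([] : List (Set (X × List X))) u v ↔ u = v := Iff.rfl

theorem derivesFrom_cons {X : Type} (t : Set (X × List X)) (ts : List (Set (X × List X)))
    (u v : List X) :
    DerivesFrom (t :: ts) u v ↔ ∃ w, TableStep t u w ∧ DerivesFrom ts w v := Iff.rfl

theorem derivesFrom_append {X : Type} (ts us : List (Set (X × List X))) (u v : List X) :
    DerivesFrom (ts ++ us) u v ↔ ∃ m, DerivesFrom ts u m ∧ DerivesFrom us m v := by
  induction ts generalizing u with
  | nil => simp [derivesFrom_nil, DerivesFrom]
  | cons t ts ih =>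
    simp only [List.cons_append, derivesFrom_cons]
    constructor
    · rintro ⟨w, hw, hd⟩
      obtain ⟨m, h1, h2⟩ := (ih w).1 hd
      exact ⟨m, ⟨w, hw, h1⟩, h2⟩
    · rintro ⟨m, ⟨w, hw, h1⟩, h2⟩
      exact ⟨w, hw, (ih w).2 ⟨m, h1, h2⟩⟩

theorem derivesFrom_singleton {X : Type} (t : Set (X × List X)) (u v : List X) :
    DerivesFrom [t] u v ↔ TableStep t u v := by
  simp [DerivesFrom]

end FactorAux
section FactorAux2

/-- Extended alphabet for the factor construction. -/
abbrev NLet (C : Type) (r : ℕ) : Type := Option (Option C ⊕ (C × Fin (r + 1) × Fin (r + 1)))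

instance NLet.finite {C : Type} [Finite C] (r : ℕ) : Finite (NLet C r) := by
  have := Fintype.ofFinite C
  infer_instance

def Ntop {C : Type} {r : ℕ} : NLet C r := none
def Nbot {C : Type} {r : ℕ} : NLet C r := some (Sum.inl none)
def Nout {C : Type} {r : ℕ} (c : C) : NLet C r := some (Sum.inl (some c))
def Nmid {C : Type} {r : ℕ} (c : C) (a b : Fin (r + 1)) : NLet C r := some (Sum.inr (c, a, b))

theorem Nout_ne_Nbot {C : Type} {r : ℕ} (c : C) : (Nout c : NLet C r) ≠ Nbot := by
  simp [Nout, Nbot]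

theorem Nmid_ne_Nbot {C : Type} {r : ℕ} (c : C) (a b : Fin (r + 1)) :
    (Nmid c a b : NLet C r) ≠ Nbot := by simp [Nmid, Nbot]

theorem Nmid_inj {C : Type} {r : ℕ} {c c' : C} {a b a' b' : Fin (r + 1)}
    (h : (Nmid c a b : NLet C r) = Nmid c' a' b') : c = c' ∧ a = a' ∧ b = b' := by
  simp [Nmid] at h; tauto

def fmin (r x : ℕ) : Fin (r + 1) := ⟨min x r, by omega⟩

theorem fmin_coe (r : ℕ) {x : ℕ} (h : x ≤ r) : ((fmin r x : Fin (r + 1)) : ℕ) = x := by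
  simp [fmin]; omega

/-- Annotation relation: `w` is a copy of `v` where each letter carries a pair of
counters chaining from `a` to `b`. -/
inductive AnnRel {C : Type} (r : ℕ) : Fin (r + 1) → Fin (r + 1) → List C → List (NLet C r) → Prop
  | nil (a : Fin (r + 1)) : AnnRel r a a [] []
  | cons {m b : Fin (r + 1)} {v : List C} {w : List (NLet C r)} (a : Fin (r + 1)) (c : C) :
      AnnRel r m b v w → AnnRel r a b (c :: v) (Nmid c a m :: w)

theorem AnnRel.length {C : Type} {r : ℕ} {a b : Fin (r + 1)} {v : List C}
    {w : List (NLet C r)} (h : AnnRel r a b v w) : w.length = v.length := by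
  induction h with
  | nil => rfl
  | cons _ _ _ ih => simp [ih]

theorem AnnRel.append {C : Type} {r : ℕ} {a m b : Fin (r + 1)} {v₁ v₂ : List C}
    {w₁ w₂ : List (NLet C r)} (h1 : AnnRel r a m v₁ w₁) (h2 : AnnRel r m b v₂ w₂) :
    AnnRel r a b (v₁ ++ v₂) (w₁ ++ w₂) := by
  induction h1 with
  | nil => simpa using h2
  | cons a c _ ih => exact AnnRel.cons a c (ih h2)

theorem AnnRel.append_inv {C : Type} {r : ℕ} {a b : Fin (r + 1)} {v₁ v₂ : List C}
    {w : List (NLet C r)} (h : AnnRel r a b (v₁ ++ v₂) w) :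
    ∃ m w₁ w₂, w = w₁ ++ w₂ ∧ AnnRel r a m v₁ w₁ ∧ AnnRel r m b v₂ w₂ := by
  induction v₁ generalizing a w with
  | nil => exact ⟨a, [], w, rfl, AnnRel.nil a, by simpa using h⟩
  | cons c v₁ ih =>
    rw [List.cons_append] at h
    cases h with
    | cons a c h2 =>
      obtain ⟨m, w₁, w₂, rfl, hh1, hh2⟩ := ih h2
      exact ⟨m, _ :: w₁, w₂, rfl, AnnRel.cons a c hh1, hh2⟩

theorem AnnRel.mem {C : Type} {r : ℕ} {a b : Fin (r + 1)} {v : List C}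
    {w : List (NLet C r)} (h : AnnRel r a b v w) {x : NLet C r} (hx : x ∈ w) :
    ∃ c a' b', x = Nmid c a' b' := by
  induction h with
  | nil => cases hx
  | cons a c _ ih =>
    rcases hx with _ | hx
    · exact ⟨_, _, _, rfl⟩
    · exact ih (by assumption)

/-- Canonical annotation with respect to a weight function `h`. -/
def cann {C : Type} (r : ℕ) (h : C → ℕ) : ℕ → List C → List (NLet C r)
  | _, [] => []
  | a, c :: u => Nmid c (fmin r a) (fmin r (a + h c)) :: cann r h (a + h c) u

theorem cann_append {C : Type} (r : ℕ) (h : C → ℕ) (a : ℕ) (x y : List C) :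
    cann r h a (x ++ y) = cann r h a x ++ cann r h (a + (x.map h).sum) y := by
  induction x generalizing a with
  | nil => simp [cann]
  | cons c x ih =>
    simp only [List.cons_append, cann, List.map_cons, List.sum_cons, List.cons_append]
    rw [ih]
    ring_nf

theorem cann_annrel {C : Type} (r : ℕ) (h : C → ℕ) (u : List C) (a : ℕ) :
    AnnRel r (fmin r a) (fmin r (a + (u.map h).sum)) u (cann r h a u) := by
  induction u generalizing a with
  | nil => simpa [cann] using AnnRel.nil (C := C) (fmin r a)
  | cons c u ih =>
    have := ih (a + h c)
    rw [show a + h c + (u.map h).sum = a + ((c :: u).map h).sum by simp; ring] at this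
    exact AnnRel.cons _ c this

/-- A table is `Nbot`-closed if each rule for `Nbot` reproduces `Nbot`. -/
def BotClosed {C : Type} {r : ℕ} (t : Set (NLet C r × List (NLet C r))) : Prop :=
  ∀ v, (Nbot, v) ∈ t → Nbot ∈ v

theorem botClosed_step {C : Type} {r : ℕ} {t : Set (NLet C r × List (NLet C r))}
    (ht : BotClosed t) {u v : List (NLet C r)} (hu : Nbot ∈ u) (h : TableStep t u v) :
    Nbot ∈ v := by
  obtain ⟨vs, h1, rfl⟩ := h
  induction h1 with
  | nil => cases hu
  | cons hc htl ih =>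
    rcases hu with _ | hu
    · simp only [List.flatten_cons, List.mem_append]
      exact Or.inl (ht _ hc)
    · simp only [List.flatten_cons, List.mem_append]
      exact Or.inr (ih (by assumption))

theorem botClosed_derives {C : Type} {r : ℕ} {ts : List (Set (NLet C r × List (NLet C r)))}
    (hts : ∀ t ∈ ts, BotClosed t) {u v : List (NLet C r)} (hu : Nbot ∈ u)
    (h : DerivesFrom ts u v) : Nbot ∈ v := by
  induction ts generalizing u with
  | nil => exact h ▸ hu
  | cons t ts ih =>
    obtain ⟨w, hw, hd⟩ := h
    exact ih (fun t' ht' => hts t' (List.mem_cons_of_mem _ ht'))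
      (botClosed_step (hts t List.mem_cons_self) hu hw) hd

end FactorAux2
section FactorAux3

theorem joinHashL_nil {A : Type} : joinHashL ([] : List (List A)) = [] := rfl

theorem joinHashL_single {A : Type} (u : List A) : joinHashL [u] = u.map some := by
  simp [joinHashL]

theorem joinHashL_cons {A : Type} (u v : List A) (ws : List (List A)) :
    joinHashL (u :: v :: ws) = u.map some ++ none :: joinHashL (v :: ws) := by
  simp only [joinHashL, List.map_cons, List.intersperse_cons_cons, List.flatten_cons]
  simp

/-- Selection of the letters of `u₁#…#u_n` that belong to segments `k..l`,
when the first listed segment has 0-based index `a`. -/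
def keepJoin {A : Type} (k l : ℕ) : ℕ → List (List A) → List (Option A)
  | _, [] => []
  | a, [u] => if k - 1 ≤ a ∧ a ≤ l - 1 then u.map some else []
  | a, u :: v :: ws =>
      (if k - 1 ≤ a ∧ a ≤ l - 1 then u.map some else []) ++
        (if k ≤ a + 1 ∧ a + 1 ≤ l - 1 then [none] else []) ++ keepJoin k l (a + 1) (v :: ws)

theorem keepJoin_eq {A : Type} (k l : ℕ) (hk : 1 ≤ k) (hkl : k ≤ l) :
    ∀ (ws : List (List A)) (a : ℕ),
      keepJoin k l a ws = joinHashL ((ws.drop (k - 1 - a)).take (l - max a (k - 1))) := by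
  intro ws
  induction ws with
  | nil => intro a; simp [keepJoin, joinHashL_nil]
  | cons u ws ih =>
    intro a
    match ws, ih with
    | [], _ =>
      by_cases h1 : k - 1 ≤ a
      · rw [show k - 1 - a = 0 by omega, List.drop_zero]
        by_cases h2 : a ≤ l - 1
        · rw [show l - max a (k-1) = (l - a - 1) + 1 by omega, List.take_succ_cons,
            List.take_nil]
          simp [keepJoin, h1, h2, joinHashL_single]
        · rw [show l - max a (k-1) = 0 by omega, List.take_zero]
          simp [keepJoin, h1, h2, joinHashL_nil]
      · rw [show k - 1 - a = (k - 1 - a - 1) + 1 by omega, List.drop_succ_cons, List.drop_nil]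
        simp [keepJoin, h1, joinHashL_nil]
    | v :: ws', ih =>
      have ihv := ih (a + 1)
      by_cases h1 : k - 1 ≤ a
      · rw [show k - 1 - a = 0 by omega, List.drop_zero]
        by_cases h2 : a ≤ l - 1
        · rw [show l - max a (k-1) = (l - a - 1) + 1 by omega, List.take_succ_cons]
          by_cases h3 : a + 1 ≤ l - 1
          · rw [show l - a - 1 = (l - a - 2) + 1 by omega, List.take_succ_cons]
            rw [joinHashL_cons]
            have h4 : keepJoin k l (a+1) (v :: ws')
                = joinHashL (v :: List.take (l - a - 2) ws') := by
              rw [ihv, show k - 1 - (a+1) = 0 by omega, List.drop_zero,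
                show l - max (a+1) (k-1) = (l - a - 2) + 1 by omega, List.take_succ_cons]
            rw [keepJoin, h4]
            simp [h1, h2, show k ≤ a + 1 by omega, h3]
          · rw [show l - a - 1 = 0 by omega, List.take_zero, joinHashL_single]
            have h4 : keepJoin k l (a+1) (v :: ws') = [] := by
              rw [ihv, show l - max (a+1) (k-1) = 0 by omega, List.take_zero, joinHashL_nil]
            rw [keepJoin, h4]
            simp [h1, h2, h3]
        · rw [show l - max a (k-1) = 0 by omega, List.take_zero, joinHashL_nil]
          have h4 : keepJoin k l (a+1) (v :: ws') = [] := by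
            rw [ihv, show l - max (a+1) (k-1) = 0 by omega, List.take_zero, joinHashL_nil]
          rw [keepJoin, h4]
          simp [h2, show ¬ (a + 1 ≤ l - 1) by omega]
      · rw [show k - 1 - a = (k - 1 - (a+1)) + 1 by omega, List.drop_succ_cons]
        rw [keepJoin, ihv, show max (a+1) (k-1) = max a (k-1) by omega]
        simp [h1, show ¬ (k ≤ a + 1) by omega]

end FactorAux3
section FactorAux4

variable {β γ : Type}

/-- Transition function for the sandwich DFA. -/
private noncomputable def sandStep (M0 : Type) (step0 : M0 → γ → M0) (start0 : M0) (acc0 : Set M0)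
    (I E : Set β) (g : β → Option γ) :
    (Option M0 ⊕ Bool) → β → (Option M0 ⊕ Bool)
  | Sum.inl none, b => if b ∈ I then Sum.inl (some start0) else Sum.inr false
  | Sum.inl (some q), b =>
      if b ∈ E then (if q ∈ acc0 then Sum.inr true else Sum.inr false)
      else match g b with
        | some c => Sum.inl (some (step0 q c))
        | none => Sum.inr false
  | Sum.inr _, _ => Sum.inr false

theorem sandwich_regular (P : Language γ) (hP : P.IsRegular)
    (I E : Set β) (g : β → Option γ) (hdis : ∀ b ∈ E, g b = none) :
    Language.IsRegular {w : List β | ∃ x ∈ I, ∃ y ∈ E, ∃ (mb : List β) (s : List γ), s ∈ P ∧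
      List.Forall₂ (fun b c => g b = some c) mb s ∧ w = x :: (mb ++ [y])} := by
  obtain ⟨Q, fQ, M, hM⟩ := hP
  classical
  let D : DFA β (Option Q ⊕ Bool) :=
    ⟨sandStep Q M.step M.start M.accept I E g, Sum.inl none, {Sum.inr true}⟩
  refine ⟨Option Q ⊕ Bool, inferInstance, D, ?_⟩
  have hsinkF : ∀ w : List β, D.evalFrom (Sum.inr false) w = Sum.inr false := by
    intro w; induction w with
    | nil => rfl
    | cons b w ih => exact ih
  have hsinkT : ∀ w : List β, D.evalFrom (Sum.inr true) w = Sum.inr true ↔ w = [] := by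
    intro w; cases w with
    | nil => simp
    | cons b w =>
      have h1 : D.evalFrom (Sum.inr true) (b :: w) = Sum.inr false := hsinkF w
      simp [h1]
  -- forward run over decoded letters
  have hrun : ∀ (mb : List β) (s : List γ), List.Forall₂ (fun b c => g b = some c) mb s →
      ∀ q : Q, ∀ rest : List β, D.evalFrom (Sum.inl (some q)) (mb ++ rest)
        = D.evalFrom (Sum.inl (some (M.evalFrom q s))) rest := by
    intro mb s hf
    induction hf with
    | nil => simp [DFA.evalFrom]
    | @cons b c mb s hbc _ ih =>
      intro q rest
      have hbE : b ∉ E := fun hbE => by simp [hdis b hbE] at hbc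
      have : D.step (Sum.inl (some q)) b = Sum.inl (some (M.step q c)) := by
        simp [D, sandStep, hbE, hbc]
      simp only [List.cons_append, DFA.evalFrom, List.foldl_cons]
      rw [show List.foldl D.step (D.step (Sum.inl (some q)) b) (mb ++ rest)
          = D.evalFrom (D.step (Sum.inl (some q)) b) (mb ++ rest) from rfl, this, ih]
      simp [DFA.evalFrom]
  -- backward parsing
  have hparse : ∀ (w : List β) (q : Q), D.evalFrom (Sum.inl (some q)) w = Sum.inr true →
      ∃ (mb : List β) (s : List γ) (y : β), List.Forall₂ (fun b c => g b = some c) mb s ∧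
        y ∈ E ∧ w = mb ++ [y] ∧ M.evalFrom q s ∈ M.accept := by
    intro w
    induction w with
    | nil => intro q h; simp [DFA.evalFrom] at h
    | cons b w ih =>
      intro q h
      simp only [DFA.evalFrom, List.foldl_cons] at h
      by_cases hbE : b ∈ E
      · by_cases hq : q ∈ M.accept
        · have hstep : D.step (Sum.inl (some q)) b = Sum.inr true := by
            simp [D, sandStep, hbE, hq]
          rw [show List.foldl D.step (D.step (Sum.inl (some q)) b) w
              = D.evalFrom (D.step (Sum.inl (some q)) b) w from rfl, hstep] at h
          have : w = [] := (hsinkT w).1 h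
          subst this
          exact ⟨[], [], b, List.Forall₂.nil, hbE, rfl, by simpa [DFA.evalFrom] using hq⟩
        · have hstep : D.step (Sum.inl (some q)) b = Sum.inr false := by
            simp [D, sandStep, hbE, hq]
          rw [show List.foldl D.step (D.step (Sum.inl (some q)) b) w
              = D.evalFrom (D.step (Sum.inl (some q)) b) w from rfl, hstep, hsinkF] at h
          simp at h
      · cases hgb : g b with
        | none =>
          have hstep : D.step (Sum.inl (some q)) b = Sum.inr false := by
            simp [D, sandStep, hbE, hgb]
          rw [show List.foldl D.step (D.step (Sum.inl (some q)) b) w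
              = D.evalFrom (D.step (Sum.inl (some q)) b) w from rfl, hstep, hsinkF] at h
          simp at h
        | some c =>
          have hstep : D.step (Sum.inl (some q)) b = Sum.inl (some (M.step q c)) := by
            simp [D, sandStep, hbE, hgb]
          rw [show List.foldl D.step (D.step (Sum.inl (some q)) b) w
              = D.evalFrom (D.step (Sum.inl (some q)) b) w from rfl, hstep] at h
          obtain ⟨mb, s, y, hf, hyE, rfl, hacc⟩ := ih _ h
          exact ⟨b :: mb, c :: s, y, List.Forall₂.cons hgb hf, hyE, rfl,
            by simpa [DFA.evalFrom] using hacc⟩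
  ext w
  constructor
  · intro hw
    cases w with
    | nil => simp [D, DFA.mem_accepts, DFA.eval, DFA.evalFrom] at hw
    | cons b w =>
      have h : D.evalFrom (Sum.inl none) (b :: w) = Sum.inr true := hw
      simp only [DFA.evalFrom, List.foldl_cons] at h
      by_cases hbI : b ∈ I
      · have hstep : D.step (Sum.inl none) b = Sum.inl (some M.start) := by
          simp [D, sandStep, hbI]
        rw [show List.foldl D.step (D.step (Sum.inl none) b) w
            = D.evalFrom (D.step (Sum.inl none) b) w from rfl, hstep] at h
        obtain ⟨mb, s, y, hf, hyE, rfl, hacc⟩ := hparse w M.start h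
        exact ⟨b, hbI, y, hyE, mb, s, hM ▸ (show s ∈ M.accepts from hacc), hf, rfl⟩
      · have hstep : D.step (Sum.inl none) b = Sum.inr false := by
          simp [D, sandStep, hbI]
        rw [show List.foldl D.step (D.step (Sum.inl none) b) w
            = D.evalFrom (D.step (Sum.inl none) b) w from rfl, hstep, hsinkF] at h
        simp at h
  · rintro ⟨x, hxI, y, hyE, mb, s, hsP, hf, rfl⟩
    show D.evalFrom (Sum.inl none) (x :: (mb ++ [y])) ∈ D.accept
    simp only [DFA.evalFrom, List.foldl_cons]
    have hstep : D.step (Sum.inl none) x = Sum.inl (some M.start) := by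
      simp [D, sandStep, hxI]
    rw [show List.foldl D.step (D.step (Sum.inl none) x) (mb ++ [y])
        = D.evalFrom (D.step (Sum.inl none) x) (mb ++ [y]) from rfl, hstep,
      hrun mb s hf M.start [y]]
    have hacc : M.evalFrom M.start s ∈ M.accept := by rw [← hM] at hsP; exact hsP
    have hacc' : List.foldl M.step M.start s ∈ M.accept := hacc
    have : D.evalFrom (Sum.inl (some (M.evalFrom M.start s))) [y] = Sum.inr true := by
      simp only [DFA.evalFrom, List.foldl_cons, List.foldl_nil]
      simp [D, sandStep, hyE, hacc']
    rw [this]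
    exact rfl

end FactorAux4
section FactorAux5

variable {A C : Type}

/-- Lift of a table to the annotated alphabet. -/
def liftRules (r : ℕ) (t : Set (C × List C)) : Set (NLet C r × List (NLet C r)) :=
  {p | p.2 = [Nbot] ∨
    ∃ c a b v w, (c, v) ∈ t ∧ AnnRel r a b v w ∧ p = (Nmid c a b, w)}

/-- The initial table: rewrite the fresh start letter into an annotated seed. -/
def initRules (r : ℕ) (seed : List C) (e : Fin (r + 1)) : Set (NLet C r × List (NLet C r)) :=
  {p | p.2 = [Nbot] ∨ ∃ w, AnnRel r 0 e seed w ∧ p = (Ntop, w)}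

/-- The final table, as a function. -/
noncomputable def finFun (r k l : ℕ) (emb : Option A ↪ C) : NLet C r → List (NLet C r) :=
  fun x =>
  match x with
  | some (Sum.inr (c, a, b)) =>
    if c = emb none then
      (if (b : ℕ) = (a : ℕ) + 1 then
        (if k ≤ (b : ℕ) ∧ (b : ℕ) ≤ l - 1 then [Nout c] else []) else [Nbot])
    else if ∃ o : A, c = emb (some o) then
      (if (a : ℕ) = (b : ℕ) then
        (if k - 1 ≤ (a : ℕ) ∧ (a : ℕ) ≤ l - 1 then [Nout c] else []) else [Nbot])
    else [Nbot]
  | _ => [Nbot]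

theorem finFun_bot (r k l : ℕ) (emb : Option A ↪ C) :
    finFun r k l emb (Nbot : NLet C r) = [Nbot] := rfl

theorem finFun_mid (r k l : ℕ) (emb : Option A ↪ C) (c : C) (a b : Fin (r + 1)) :
    finFun r k l emb (Nmid c a b) =
    (if c = emb none then
      (if (b : ℕ) = (a : ℕ) + 1 then
        (if k ≤ (b : ℕ) ∧ (b : ℕ) ≤ l - 1 then [Nout c] else []) else [Nbot])
    else if ∃ o : A, c = emb (some o) then
      (if (a : ℕ) = (b : ℕ) then
        (if k - 1 ≤ (a : ℕ) ∧ (a : ℕ) ≤ l - 1 then [Nout c] else []) else [Nbot])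
    else [Nbot]) := rfl

theorem liftRules_finite [Finite C] (r : ℕ) {t : Set (C × List C)} (ht : t.Finite) :
    (liftRules r t).Finite := by
  obtain ⟨N, hN⟩ : ∃ N, ∀ p ∈ t, (p.2 : List C).length ≤ N := by
    obtain ⟨N, hN⟩ := (ht.image (fun p => p.2.length)).bddAbove
    exact ⟨N, fun p hp => hN ⟨p, hp, rfl⟩⟩
  apply Set.Finite.subset
    (Set.Finite.union (Set.finite_range (fun x : NLet C r => (x, ([Nbot] : List (NLet C r)))))
      (Set.Finite.prod (Set.finite_univ (α := NLet C r)) (List.finite_length_le (NLet C r) N)))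
  rintro ⟨x, w⟩ hp
  rcases hp with h | ⟨c, a, b, v, w', hv, hann, heq⟩
  · exact Or.inl ⟨x, by simp_all⟩
  · obtain ⟨rfl, rfl⟩ := Prod.mk.inj heq
    exact Or.inr ⟨trivial, by simpa [hann.length] using hN _ hv⟩

theorem isTable_liftRules [Finite C] (r : ℕ) {t : Set (C × List C)} (ht : IsTable t) :
    IsTable (liftRules r t) :=
  ⟨liftRules_finite r ht.1, fun c => ⟨[Nbot], Or.inl rfl⟩⟩

theorem isTable_initRules [Finite C] (r : ℕ) (seed : List C) (e : Fin (r + 1)) :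
    IsTable (initRules r seed e) := by
  constructor
  · apply Set.Finite.subset
      (Set.Finite.union (Set.finite_range (fun x : NLet C r => (x, ([Nbot] : List (NLet C r)))))
        (Set.Finite.prod (Set.finite_univ (α := NLet C r))
          (List.finite_length_le (NLet C r) seed.length)))
    rintro ⟨x, w⟩ hp
    rcases hp with h | ⟨w', hann, heq⟩
    · exact Or.inl ⟨x, by simp_all⟩
    · obtain ⟨rfl, rfl⟩ := Prod.mk.inj heq
      exact Or.inr ⟨trivial, by simp [hann.length]⟩
  · exact fun c => ⟨[Nbot], Or.inl rfl⟩

theorem botClosed_of_sub_lift {r : ℕ} {t : Set (C × List C)}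
    {t' : Set (NLet C r × List (NLet C r))} (h : t' ⊆ liftRules r t) : BotClosed t' := by
  intro v hv
  rcases h hv with h1 | ⟨c, a, b, v', w, _, _, heq⟩
  · have hv1 : v = [Nbot] := h1
    simp [hv1]
  · exact absurd ((Prod.mk.inj heq).1).symm (Nmid_ne_Nbot c a b)

theorem botClosed_initRules {r : ℕ} {seed : List C} {e : Fin (r + 1)}
    {t' : Set (NLet C r × List (NLet C r))} (h : t' ⊆ initRules r seed e) : BotClosed t' := by
  intro v hv
  rcases h hv with h1 | ⟨w, _, heq⟩
  · have hv1 : v = [Nbot] := h1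
    simp [hv1]
  · have := (Prod.mk.inj heq).1
    simp [Ntop, Nbot] at this

theorem botClosed_graph_finFun {r k l : ℕ} (emb : Option A ↪ C) :
    BotClosed (graphT (finFun (C := C) r k l emb)) := by
  intro v hv
  rw [mem_graphT] at hv
  simp [hv, finFun_bot]

end FactorAux5
section FactorAux6

variable {A C : Type}

theorem lift_step {r : ℕ} {t : Set (C × List C)} {t' : Set (NLet C r × List (NLet C r))}
    (hsub : t' ⊆ liftRules r t) {a b : Fin (r + 1)} {u : List C} {u' v' : List (NLet C r)}
    (hann : AnnRel r a b u u') (hstep : TableStep t' u' v') :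
    Nbot ∈ v' ∨ ∃ v, TableStep t u v ∧ AnnRel r a b v v' := by
  induction hann generalizing v' with
  | nil =>
    rw [tableStep_nil] at hstep
    subst hstep
    exact Or.inr ⟨[], (tableStep_nil t []).2 rfl, AnnRel.nil _⟩
  | @cons m b v w a c hannt ih =>
    obtain ⟨x, v₂, hx, hstep₂, rfl⟩ := tableStep_cons_inv hstep
    rcases hsub hx with h1 | ⟨c', a', b', v₁, w₁, hv, hann1, heq⟩
    · have : x = [Nbot] := h1
      subst this
      exact Or.inl (by simp)
    · obtain ⟨hmid, rfl⟩ := Prod.mk.inj heq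
      obtain ⟨rfl, rfl, rfl⟩ := Nmid_inj hmid
      rcases ih hstep₂ with hbot | ⟨v₂o, hstep2, hann2⟩
      · exact Or.inl (by simp [hbot])
      · exact Or.inr ⟨v₁ ++ v₂o, tableStep_cons hv hstep2, hann1.append hann2⟩

theorem botClosed_of_forall₂ {r : ℕ} {ts : List (Set (C × List C))}
    {ts' : List (Set (NLet C r × List (NLet C r)))}
    (hsub : List.Forall₂ (fun t t' => t' ⊆ liftRules r t) ts ts') :
    ∀ tt ∈ ts', BotClosed tt := by
  induction hsub with
  | nil => intro tt htt; cases htt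
  | cons h1 _ ih =>
    intro tt htt
    rcases htt with _ | htt
    · exact botClosed_of_sub_lift h1
    · exact ih _ (by assumption)

theorem lift_derives {r : ℕ} {ts : List (Set (C × List C))}
    {ts' : List (Set (NLet C r × List (NLet C r)))}
    (hsub : List.Forall₂ (fun t t' => t' ⊆ liftRules r t) ts ts')
    {a b : Fin (r + 1)} {u : List C} {u' v' : List (NLet C r)}
    (hann : AnnRel r a b u u') (hder : DerivesFrom ts' u' v') :
    Nbot ∈ v' ∨ ∃ v, DerivesFrom ts u v ∧ AnnRel r a b v v' := by
  induction hsub generalizing u u' with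
  | nil => exact Or.inr ⟨u, rfl, hder ▸ hann⟩
  | @cons t t' ts ts' hsub1 hsubt ih =>
    obtain ⟨w, hw, hd⟩ := hder
    rcases lift_step hsub1 hann hw with hbot | ⟨v, hstep, hannv⟩
    · exact Or.inl (botClosed_derives (botClosed_of_forall₂ hsubt) hbot hd)
    · rcases ih hannv hd with hbot | ⟨v2, hder2, hann2⟩
      · exact Or.inl hbot
      · exact Or.inr ⟨v2, ⟨v, hstep, hder2⟩, hann2⟩

theorem lift_step_rev {r : ℕ} {t : Set (C × List C)} {u v : List C}
    (hstep : TableStep t u v) {a b : Fin (r + 1)} {v' : List (NLet C r)}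
    (hann : AnnRel r a b v v') :
    ∃ u', AnnRel r a b u u' ∧ TableStep (liftRules r t) u' v' := by
  obtain ⟨vs, hf, rfl⟩ := hstep
  induction hf generalizing a v' with
  | nil =>
    cases hann
    exact ⟨[], AnnRel.nil _, (tableStep_nil _ _).2 rfl⟩
  | @cons c x u vs hcx hfs ih =>
    rw [List.flatten_cons] at hann
    obtain ⟨m, w₁, w₂, rfl, h1, h2⟩ := hann.append_inv
    obtain ⟨u₂', hann2, hstep2⟩ := ih h2
    exact ⟨Nmid c a m :: u₂', AnnRel.cons a c hann2,
      tableStep_cons (Or.inr ⟨c, a, m, x, w₁, hcx, h1, rfl⟩) hstep2⟩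

theorem lift_derives_rev {r : ℕ} {ts : List (Set (C × List C))} {u v : List C}
    (hd : DerivesFrom ts u v) {a b : Fin (r + 1)} {v' : List (NLet C r)}
    (hann : AnnRel r a b v v') :
    ∃ u', AnnRel r a b u u' ∧ DerivesFrom (ts.map (liftRules r)) u' v' := by
  induction ts generalizing u with
  | nil =>
    exact ⟨v', hd ▸ hann, rfl⟩
  | cons t ts ih =>
    obtain ⟨w, hw, hdr⟩ := hd
    obtain ⟨w', hannw, hdr'⟩ := ih hdr
    obtain ⟨u', hannu, hstep'⟩ := lift_step_rev hw hannw
    exact ⟨u', hannu, ⟨w', hstep', hdr'⟩⟩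

/-- If the final table produces no `Nbot`, the annotated word covers only letters
in the range of `emb`. -/
theorem ann_finfree_range {r k l : ℕ} (emb : Option A ↪ C) {a b : Fin (r + 1)}
    {v : List C} {w' : List (NLet C r)} (hann : AnnRel r a b v w')
    (hfree : Nbot ∉ (w'.map (finFun r k l emb)).flatten) :
    ∃ w₀ : List (Option A), v = w₀.map emb := by
  induction hann with
  | nil => exact ⟨[], rfl⟩
  | @cons m b v w a c hannt ih =>
    simp only [List.map_cons, List.flatten_cons, List.mem_append] at hfree
    push_neg at hfree
    obtain ⟨w₀, rfl⟩ := ih hfree.2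
    by_cases h1 : c = emb none
    · exact ⟨none :: w₀, by simp [h1]⟩
    · by_cases h2 : ∃ o : A, c = emb (some o)
      · obtain ⟨o, rfl⟩ := h2
        exact ⟨some o :: w₀, by simp⟩
      · exfalso
        apply hfree.1
        rw [finFun_mid]
        simp [h1, h2]

end FactorAux6
section FactorAux7

variable {A C : Type}

theorem AnnRel.cons_inv {r : ℕ} {a b : Fin (r + 1)} {c : C} {v : List C}
    {w' : List (NLet C r)} (h : AnnRel r a b (c :: v) w') :
    ∃ m w₂, w' = Nmid c a m :: w₂ ∧ AnnRel r m b v w₂ := by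
  cases h with
  | cons _ _ ht => exact ⟨_, _, rfl, ht⟩

/-- Weight function counting occurrences of the hash letter. -/
noncomputable def hzero (emb : Option A ↪ C) : C → ℕ :=
  fun c => if c = emb none then 1 else 0

theorem hzero_some (emb : Option A ↪ C) (x : A) : hzero emb (emb (some x)) = 0 := by
  simp [hzero, emb.injective.eq_iff]

theorem hzero_none (emb : Option A ↪ C) : hzero emb (emb none) = 1 := by
  simp [hzero]

theorem hzero_seg_sum (emb : Option A ↪ C) (u : List A) :
    (((u.map some).map emb).map (hzero emb)).sum = 0 := by
  induction u with
  | nil => rfl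
  | cons x u ih =>
    rw [List.map_cons, List.map_cons, List.map_cons, List.sum_cons, hzero_some, ih]

theorem hzero_join_sum (emb : Option A ↪ C) :
    ∀ ws : List (List A), ws ≠ [] →
      (((joinHashL ws).map emb).map (hzero emb)).sum = ws.length - 1 := by
  intro ws
  induction ws with
  | nil => intro h; exact absurd rfl h
  | cons u ws ih =>
    intro _
    cases ws with
    | nil => rw [joinHashL_single, hzero_seg_sum]; simp
    | cons v ws' =>
      rw [joinHashL_cons, List.map_append, List.map_append, List.sum_append, hzero_seg_sum,
        List.map_cons, List.map_cons, List.sum_cons, hzero_none, ih (by simp)]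
      simp only [List.length_cons]
      omega

theorem finFun_ann_seg {r k l : ℕ} (emb : Option A ↪ C) :
    ∀ (u : List A) {a b : Fin (r + 1)} {w' : List (NLet C r)},
      AnnRel r a b ((u.map some).map emb) w' →
      Nbot ∉ (w'.map (finFun r k l emb)).flatten →
      a = b ∧ (w'.map (finFun r k l emb)).flatten =
        (if k - 1 ≤ (a : ℕ) ∧ (a : ℕ) ≤ l - 1 then
          u.map (fun x => Nout (emb (some x))) else []) := by
  intro u
  induction u with
  | nil =>
    intro a b w' hann hfree
    cases hann
    refine ⟨rfl, ?_⟩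
    split <;> simp
  | cons x u ih =>
    intro a b w' hann hfree
    simp only [List.map_cons] at hann
    obtain ⟨m, w₂, rfl, hannt⟩ := hann.cons_inv
    simp only [List.map_cons, List.flatten_cons, List.mem_append] at hfree
    push_neg at hfree
    have h1 : ¬ (emb (some x) = emb none) := by simp [emb.injective.eq_iff]
    have h2 : ∃ o : A, emb (some x) = emb (some o) := ⟨x, rfl⟩
    have hhead := finFun_mid r k l emb (emb (some x)) a m
    rw [if_neg h1, if_pos h2] at hhead
    by_cases ham : (a : ℕ) = (m : ℕ)
    · have ham' : a = m := Fin.ext ham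
      rw [if_pos ham] at hhead
      obtain ⟨hmb, htail⟩ := ih hannt hfree.2
      subst ham'
      refine ⟨hmb, ?_⟩
      rw [List.map_cons, List.flatten_cons, hhead, htail]
      by_cases hP : k - 1 ≤ (a : ℕ) ∧ (a : ℕ) ≤ l - 1
      · rw [if_pos hP, if_pos hP, if_pos hP, List.map_cons]
        rfl
      · rw [if_neg hP, if_neg hP, if_neg hP]
        rfl
    · exfalso
      apply hfree.1
      rw [hhead, if_neg ham]
      simp

theorem finFun_ann_join {r k l : ℕ} (emb : Option A ↪ C) :
    ∀ (ws : List (List A)) {a b : Fin (r + 1)} {w' : List (NLet C r)},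
      AnnRel r a b ((joinHashL ws).map emb) w' →
      Nbot ∉ (w'.map (finFun r k l emb)).flatten →
      ws ≠ [] →
      (w'.map (finFun r k l emb)).flatten =
        (keepJoin k l (a : ℕ) ws).map (fun o => Nout (emb o)) := by
  intro ws
  induction ws with
  | nil => intro a b w' _ _ h; exact absurd rfl h
  | cons u ws ih =>
    intro a b w' hann hfree _
    cases ws with
    | nil =>
      rw [joinHashL_single] at hann
      obtain ⟨rfl, hval⟩ := finFun_ann_seg emb u hann hfree
      rw [hval, keepJoin]
      by_cases hP : k - 1 ≤ (a : ℕ) ∧ (a : ℕ) ≤ l - 1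
      · rw [if_pos hP, if_pos hP, List.map_map]
        rfl
      · rw [if_neg hP, if_neg hP]
        rfl
    | cons v ws' =>
      rw [joinHashL_cons, List.map_append] at hann
      obtain ⟨mm, w₁, w₂, rfl, hseg, hrest⟩ := hann.append_inv
      simp only [List.map_append, List.flatten_append, List.mem_append] at hfree
      push_neg at hfree
      obtain ⟨rfl, hsegval⟩ := finFun_ann_seg emb u hseg hfree.1
      simp only [List.map_cons] at hrest
      obtain ⟨m2, w₃, rfl, hrest2⟩ := hrest.cons_inv
      have hfree2 := hfree.2
      simp only [List.map_cons, List.flatten_cons, List.mem_cons, List.mem_append] at hfree2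
      push_neg at hfree2
      have hhead := finFun_mid r k l emb (emb none) a m2
      rw [if_pos rfl] at hhead
      by_cases hm2 : (m2 : ℕ) = (a : ℕ) + 1
      · rw [if_pos hm2] at hhead
        rw [hm2] at hhead
        have hrestval := ih hrest2 (by
          intro hmem
          rcases hfree2 with ⟨_, h2⟩
          exact h2 hmem) (by simp)
        rw [hm2] at hrestval
        rw [List.map_append, List.flatten_append, hsegval, List.map_cons,
          List.flatten_cons, hhead, hrestval]
        rw [keepJoin]
        by_cases hP : k - 1 ≤ (a : ℕ) ∧ (a : ℕ) ≤ l - 1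
        · rw [if_pos hP, if_pos hP]
          by_cases hQ : k ≤ (a : ℕ) + 1 ∧ (a : ℕ) + 1 ≤ l - 1
          · rw [if_pos hQ, if_pos hQ]
            simp [List.map_map]
          · rw [if_neg hQ, if_neg hQ]
            simp [List.map_map]
        · rw [if_neg hP, if_neg hP]
          by_cases hQ : k ≤ (a : ℕ) + 1 ∧ (a : ℕ) + 1 ≤ l - 1
          · rw [if_pos hQ, if_pos hQ]
            simp [List.map_map]
          · rw [if_neg hQ, if_neg hQ]
            simp [List.map_map]
      · exfalso
        apply hfree2.1
        rw [hhead, if_neg hm2]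
        simp

end FactorAux7
section FactorAux8

variable {A C : Type}

theorem finFun_cann_seg {r k l : ℕ} (emb : Option A ↪ C) :
    ∀ (u : List A) (a : ℕ), a ≤ r →
      ((cann r (hzero emb) a ((u.map some).map emb)).map (finFun r k l emb)).flatten =
        (if k - 1 ≤ a ∧ a ≤ l - 1 then u.map (fun x => Nout (emb (some x))) else []) := by
  intro u
  induction u with
  | nil =>
    intro a _
    show ([] : List (NLet C r)) = _
    split <;> rfl
  | cons x u ih =>
    intro a ha
    simp only [List.map_cons, cann, hzero_some, Nat.add_zero]
    rw [List.flatten_cons, ih a ha]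
    have hhead := finFun_mid r k l emb (emb (some x)) (fmin r a) (fmin r a)
    rw [if_neg (by simp [emb.injective.eq_iff]), if_pos ⟨x, rfl⟩, if_pos rfl,
      fmin_coe r ha] at hhead
    rw [hhead]
    by_cases hP : k - 1 ≤ a ∧ a ≤ l - 1
    · rw [if_pos hP, if_pos hP, if_pos hP]
      rfl
    · rw [if_neg hP, if_neg hP, if_neg hP]
      rfl

theorem finFun_cann_join {r k l : ℕ} (emb : Option A ↪ C) :
    ∀ (ws : List (List A)) (a : ℕ), ws ≠ [] → a + (ws.length - 1) ≤ r →
      ((cann r (hzero emb) a ((joinHashL ws).map emb)).map (finFun r k l emb)).flatten =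
        (keepJoin k l a ws).map (fun o => Nout (emb o)) := by
  intro ws
  induction ws with
  | nil => intro a h; exact absurd rfl h
  | cons u ws ih =>
    intro a _ hbound
    cases ws with
    | nil =>
      rw [joinHashL_single, finFun_cann_seg emb u a (by simpa using hbound), keepJoin]
      by_cases hP : k - 1 ≤ a ∧ a ≤ l - 1
      · rw [if_pos hP, if_pos hP, List.map_map]
        rfl
      · rw [if_neg hP, if_neg hP]
        rfl
    | cons v ws' =>
      have ha1 : a + 1 ≤ r := by
        simp only [List.length_cons] at hbound
        omega
      rw [joinHashL_cons, List.map_append, cann_append, hzero_seg_sum, Nat.add_zero,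
        List.map_cons, List.map_append, List.flatten_append]
      show (List.map _ (cann r (hzero emb) a (List.map (⇑emb) (List.map some u)))).flatten ++
        (List.map _ (Nmid (emb none) (fmin r a) (fmin r (a + hzero emb (emb none)))
          :: cann r (hzero emb) (a + hzero emb (emb none)) _)).flatten = _
      rw [hzero_none]
      rw [finFun_cann_seg emb u a (by omega)]
      rw [List.map_cons, List.flatten_cons]
      have hhead := finFun_mid r k l emb (emb none) (fmin r a) (fmin r (a + 1))
      rw [if_pos rfl, fmin_coe r (by omega : a ≤ r), fmin_coe r ha1, if_pos rfl] at hhead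
      rw [hhead]
      have ihv := ih (a + 1) (by simp) (by simp only [List.length_cons] at hbound ⊢; omega)
      rw [ihv, keepJoin]
      by_cases hP : k - 1 ≤ a ∧ a ≤ l - 1
      · rw [if_pos hP, if_pos hP]
        by_cases hQ : k ≤ a + 1 ∧ a + 1 ≤ l - 1
        · rw [if_pos hQ, if_pos hQ]
          simp [List.map_map]
        · rw [if_neg hQ, if_neg hQ]
          simp [List.map_map]
      · rw [if_neg hP, if_neg hP]
        by_cases hQ : k ≤ a + 1 ∧ a + 1 ≤ l - 1
        · rw [if_pos hQ, if_pos hQ]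
          simp [List.map_map]
        · rw [if_neg hQ, if_neg hQ]
          simp [List.map_map]

end FactorAux8
section FactorAux9

variable {A C ι : Type}

def deriv1 (f : C → List C) (u : List C) : List C := (u.map f).flatten

theorem deriv1_append (f : C → List C) (u v : List C) :
    deriv1 f (u ++ v) = deriv1 f u ++ deriv1 f v := by simp [deriv1]

theorem deriv1_cons (f : C → List C) (c : C) (u : List C) :
    deriv1 f (c :: u) = f c ++ deriv1 f u := by simp [deriv1]

def deriveW (rhs : ι → C → List C) : List ι → List C → List C
  | [], u => u
  | i :: s, u => deriveW rhs s (deriv1 (rhs i) u)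

theorem deriveW_append (rhs : ι → C → List C) :
    ∀ (s : List ι) (u v : List C), deriveW rhs s (u ++ v) = deriveW rhs s u ++ deriveW rhs s v := by
  intro s
  induction s with
  | nil => intro u v; rfl
  | cons i s ih =>
    intro u v
    show deriveW rhs s (deriv1 (rhs i) (u ++ v)) = _
    rw [deriv1_append, ih]
    rfl

theorem deriveW_sum (h : C → ℕ) (rhs : ι → C → List C) (s : List ι) :
    ∀ u : List C,
      ((deriveW rhs s u).map h).sum
        = (u.map (fun c => ((deriveW rhs s [c]).map h).sum)).sum := by
  intro u
  induction u with
  | nil =>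
    have : deriveW rhs s [] = [] := by
      induction s with
      | nil => rfl
      | cons i s ih => exact ih
    simp [this]
  | cons c u ih =>
    have : (c :: u) = [c] ++ u := rfl
    rw [this, deriveW_append, List.map_append, List.sum_append, ih]
    simp

/-- Hash-weight of the word eventually derived from a single letter. -/
def hcnt (h : C → ℕ) (rhs : ι → C → List C) (s : List ι) (c : C) : ℕ :=
  ((deriveW rhs s [c]).map h).sum

theorem hcnt_nil (h : C → ℕ) (rhs : ι → C → List C) (c : C) : hcnt h rhs [] c = h c := by
  simp [hcnt, deriveW]

theorem hcnt_cons (h : C → ℕ) (rhs : ι → C → List C) (i : ι) (s : List ι) (c : C) :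
    hcnt h rhs (i :: s) c = ((rhs i c).map (hcnt h rhs s)).sum := by
  show ((deriveW rhs s (deriv1 (rhs i) [c])).map h).sum = _
  have : deriv1 (rhs i) [c] = rhs i c := by simp [deriv1]
  rw [this, deriveW_sum h rhs s]
  rfl

theorem cann_step {r : ℕ} (h1 h2 : C → ℕ) (f : C → List C)
    (hcomp : ∀ c, h1 c = ((f c).map h2).sum)
    (σ : NLet C r → List (NLet C r))
    (hσ : ∀ (c : C) (a m : Fin (r + 1)), (m : ℕ) = (a : ℕ) + h1 c → (a : ℕ) + h1 c ≤ r →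
      σ (Nmid c a m) = cann r h2 (a : ℕ) (f c)) :
    ∀ (u : List C) (a : ℕ), a + (u.map h1).sum ≤ r →
      ((cann r h1 a u).map σ).flatten = cann r h2 a (deriv1 f u) := by
  intro u
  induction u with
  | nil => intro a _; rfl
  | cons c u ih =>
    intro a hb
    have hsums : h1 c + (u.map h1).sum = ((c :: u).map h1).sum := by simp
    have hc_le : a + h1 c ≤ r := by simp only [List.map_cons, List.sum_cons] at hb; omega
    have ha_le : a ≤ r := by omega
    show (σ (Nmid c (fmin r a) (fmin r (a + h1 c))) ::
      (cann r h1 (a + h1 c) u).map σ).flatten = _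
    rw [List.flatten_cons,
      hσ c (fmin r a) (fmin r (a + h1 c))
        (by rw [fmin_coe r ha_le, fmin_coe r hc_le]) (by rw [fmin_coe r ha_le]; exact hc_le),
      fmin_coe r ha_le, deriv1_cons, cann_append, ← hcomp c,
      ih (a + h1 c) (by simp only [List.map_cons, List.sum_cons] at hb; omega)]

/-- The type of strategies for a lifted table. -/
def StratT (r : ℕ) (t : Set (C × List C)) : Type :=
  {σ : NLet C r → List (NLet C r) // ∀ x, (x, σ x) ∈ liftRules r t}

theorem stratT_finite [Finite C] {r : ℕ} {t : Set (C × List C)}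
    (ht : (liftRules r t).Finite) : Finite (StratT r t) := by
  have hfib : ∀ x : NLet C r, Finite {w : List (NLet C r) // (x, w) ∈ liftRules r t} := by
    intro x
    have hsub : {w : List (NLet C r) | (x, w) ∈ liftRules r t} ⊆ Prod.snd '' (liftRules r t) :=
      fun w hw => ⟨(x, w), hw, rfl⟩
    exact ((ht.image Prod.snd).subset hsub).to_subtype
  exact Finite.of_injective
    (fun σ : StratT r t => (fun x => (⟨σ.1 x, σ.2 x⟩ : {w // (x, w) ∈ liftRules r t})))
    (fun σ τ h => Subtype.ext (funext fun x => congrArg Subtype.val (congrFun h x)))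

theorem derivesFrom_det (tab : ι → Set (C × List C)) (rhs : ι → C → List C)
    (heq : ∀ i, tab i = graphT (rhs i)) :
    ∀ (s : List ι) (u v : List C), DerivesFrom (s.map tab) u v ↔ v = deriveW rhs s u := by
  intro s
  induction s with
  | nil => intro u v; exact ⟨fun h => h.symm, fun h => h.symm⟩
  | cons i s ih =>
    intro u v
    constructor
    · rintro ⟨w, hw, hd⟩
      rw [heq i, tableStep_graphT] at hw
      subst hw
      exact (ih _ v).1 hd
    · intro hv
      refine ⟨deriv1 (rhs i) u, ?_, (ih _ v).2 hv⟩
      rw [heq i, tableStep_graphT]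
      rfl

theorem derives_lift_det {r : ℕ} (emb : Option A ↪ C) (tab : ι → Set (C × List C))
    (rhs : ι → C → List C) (hrhs : ∀ i c, (c, rhs i c) ∈ tab i) :
    ∀ (s : List ι) (u : List C) (a : ℕ),
      a + ((deriveW rhs s u).map (hzero emb)).sum ≤ r →
      ∃ m : List ((i : ι) × StratT r (tab i)),
        m.map Sigma.fst = s ∧
        DerivesFrom (m.map (fun p => graphT p.2.1))
          (cann r (hcnt (hzero emb) rhs s) a u)
          (cann r (hzero emb) a (deriveW rhs s u)) := by
  intro s
  induction s with
  | nil =>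
    intro u a _
    refine ⟨[], rfl, ?_⟩
    have : hcnt (hzero emb) rhs [] = hzero emb := funext (hcnt_nil (hzero emb) rhs)
    rw [this]
    rfl
  | cons i s ih =>
    intro u a hb
    set h2 := hcnt (hzero emb) rhs s with hh2
    set h1 := hcnt (hzero emb) rhs (i :: s) with hh1
    classical
    let σ : NLet C r → List (NLet C r) := fun x =>
      match x with
      | some (Sum.inr (c, aa, mm)) =>
          if (mm : ℕ) = (aa : ℕ) + h1 c ∧ (aa : ℕ) + h1 c ≤ r then
            cann r h2 (aa : ℕ) (rhs i c)
          else [Nbot]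
      | _ => [Nbot]
    have hσval : ∀ x, (x, σ x) ∈ liftRules r (tab i) := by
      intro x
      match x with
      | none => exact Or.inl rfl
      | some (Sum.inl oc) => exact Or.inl rfl
      | some (Sum.inr (c, aa, mm)) =>
        show (Nmid c aa mm, σ (Nmid c aa mm)) ∈ _
        by_cases hcond : (mm : ℕ) = (aa : ℕ) + h1 c ∧ (aa : ℕ) + h1 c ≤ r
        · have hval : σ (Nmid c aa mm) = cann r h2 (aa : ℕ) (rhs i c) := by
            show (if _ then _ else _) = _
            rw [if_pos hcond]
          rw [hval]
          refine Or.inr ⟨c, aa, mm, rhs i c, _, hrhs i c, ?_, rfl⟩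
          have := cann_annrel r h2 (rhs i c) (aa : ℕ)
          have hsum : ((rhs i c).map h2).sum = h1 c := (hcnt_cons (hzero emb) rhs i s c).symm
          rw [hsum] at this
          have e1 : fmin r (aa : ℕ) = aa := Fin.ext (fmin_coe r (by omega))
          have e2 : fmin r ((aa : ℕ) + h1 c) = mm := Fin.ext (by rw [fmin_coe r hcond.2, hcond.1])
          rwa [e1, e2] at this
        · have hval : σ (Nmid c aa mm) = [Nbot] := by
            show (if _ then _ else _) = _
            rw [if_neg hcond]
          rw [hval]
          exact Or.inl rfl
    have hstep : TableStep (graphT σ) (cann r h1 a u) (cann r h2 a (deriv1 (rhs i) u)) := by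
      rw [tableStep_graphT]
      refine (cann_step h1 h2 (rhs i) (fun c => hcnt_cons (hzero emb) rhs i s c) σ ?_ u a ?_).symm
      · intro c aa mm hm hle
        show (if _ then _ else _) = _
        rw [if_pos ⟨hm, hle⟩]
      · have : (u.map h1).sum = ((deriveW rhs (i :: s) u).map (hzero emb)).sum := by
          rw [deriveW_sum (hzero emb) rhs (i :: s) u]
          rfl
        omega
    obtain ⟨m', hm', hd'⟩ := ih (deriv1 (rhs i) u) a (by exact hb)
    exact ⟨⟨i, ⟨σ, hσval⟩⟩ :: m', by simp [hm'], ⟨_, hstep, hd'⟩⟩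

end FactorAux9
section FactorAux10

theorem forall₂_decode_iff {X Y S : Type} (g : X → Option Y) (enc : S → X) (pr : S → Y)
    (hg1 : ∀ p, g (enc p) = some (pr p))
    (hg2 : ∀ b c, g b = some c → ∃ p, b = enc p ∧ pr p = c) :
    ∀ (mb : List X) (s : List Y),
      List.Forall₂ (fun b c => g b = some c) mb s ↔
        ∃ m : List S, mb = m.map enc ∧ m.map pr = s := by
  intro mb
  induction mb with
  | nil =>
    intro s
    constructor
    · intro h
      cases h
      exact ⟨[], rfl, rfl⟩
    · rintro ⟨m, hm, rfl⟩
      have : m = [] := by cases m with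
        | nil => rfl
        | cons p m => simp at hm
      subst this
      exact List.Forall₂.nil
  | cons b mb ih =>
    intro s
    constructor
    · intro h
      cases h with
      | cons hbc ht =>
        rename_i c s'
        obtain ⟨m', hm', hpr⟩ := (ih s').1 ht
        obtain ⟨p, rfl, rfl⟩ := hg2 b c hbc
        exact ⟨p :: m', by simp [hm'], by simp [hpr]⟩
    · rintro ⟨m, hm, rfl⟩
      cases m with
      | nil => simp at hm
      | cons p m' =>
        simp only [List.map_cons, List.cons.injEq] at hm
        obtain ⟨rfl, hm'⟩ := hm
        exact List.Forall₂.cons (hg1 p) ((ih (m'.map pr)).2 ⟨m', hm', rfl⟩)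

theorem bot_in_finFun_flatten {A C : Type} {r k l : ℕ} (emb : Option A ↪ C)
    {u : List (NLet C r)} (h : Nbot ∈ u) :
    Nbot ∈ (u.map (finFun r k l emb)).flatten := by
  refine List.mem_flatten.2 ⟨[Nbot], ?_, by simp⟩
  have := List.mem_map_of_mem (f := finFun r k l emb) h
  rwa [finFun_bot] at this

theorem nbot_not_mem_map_out {A C : Type} {r : ℕ} (emb : Option A ↪ C) (w : List (Option A)) :
    Nbot ∉ w.map (fun o => (Nout (emb o) : NLet C r)) := by
  intro hmem
  obtain ⟨o, _, h⟩ := List.mem_map.1 hmem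
  exact Nout_ne_Nbot _ h

theorem empty_regular {ι : Type} : (0 : Language ι).IsRegular := by
  refine ⟨Unit, inferInstance, ⟨fun _ _ => (), (), ∅⟩, ?_⟩
  ext x
  exact iff_of_false (fun hx => hx) (fun hx => hx)

end FactorAux10
section FactorMain

theorem factor_ET0L {A : Type} (r k l : ℕ) (hk : 1 ≤ k) (hkl : k ≤ l) (hlr : l ≤ r)
    (L : Language (Option A))
    (hL : ∀ u ∈ L, ∃ ws : List (List A), ws.length = r ∧ u = joinHashL ws)
    (h : IsET0L L) : IsET0L (factorLang r k l L) := by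
  classical
  obtain ⟨C, finC, emb, ι, finι, tab, htab, control, hreg, seed, hLdef⟩ := h
  have hr1 : 1 ≤ r := le_trans (hk.trans hkl) hlr
  haveI := Fintype.ofFinite ι
  set er : Fin (r + 1) := ⟨r - 1, by omega⟩ with her
  -- the new system
  let tab' : Option (Option ι) → Set (NLet C r × List (NLet C r)) := fun x =>
    match x with
    | none => initRules r seed er
    | some none => graphT (finFun r k l emb)
    | some (some i) => liftRules r (tab i)
  let gdec : Option (Option ι) → Option ι := fun b =>
    match b with
    | some (some i) => some i
    | _ => none
  let Control' : Language (Option (Option ι)) :=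
    {w : List (Option (Option ι)) | ∃ x ∈ ({none} : Set (Option (Option ι))),
      ∃ y ∈ ({some none} : Set (Option (Option ι))), ∃ mb s, s ∈ control ∧
      List.Forall₂ (fun b c => gdec b = some c) mb s ∧ w = x :: (mb ++ [y])}
  have hdecode := forall₂_decode_iff gdec (fun i : ι => (some (some i) : Option (Option ι)))
    (fun i => i) (fun i => rfl)
    (by
      intro b c hbc
      match b with
      | none => exact absurd hbc (by simp [gdec])
      | some none => exact absurd hbc (by simp [gdec])
      | some (some i) => exact ⟨i, rfl, by simpa [gdec] using hbc⟩)
  have hmemIff : ∀ w, w ∈ Control' ↔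
      ∃ s ∈ control, w = none :: (s.map (fun i => some (some i)) ++ [some none]) := by
    intro w
    constructor
    · rintro ⟨x, hx, y, hy, mb, s, hs, hf, rfl⟩
      obtain ⟨m, rfl, rfl⟩ := (hdecode mb s).1 hf
      simp only [Set.mem_singleton_iff] at hx hy
      subst hx; subst hy
      exact ⟨m.map (fun i => i), by simpa using hs, by simp⟩
    · rintro ⟨s, hs, rfl⟩
      exact ⟨none, rfl, some none, rfl, s.map (fun i => some (some i)), s, hs,
        (hdecode _ s).2 ⟨s, rfl, by simp⟩, rfl⟩
  have hmap : ∀ s : List ι,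
      (none :: (s.map (fun i => some (some i)) ++ [some none])).map tab' =
      initRules r seed er ::
        (s.map (fun i => liftRules r (tab i)) ++ [graphT (finFun r k l emb)]) := by
    intro s
    simp only [List.map_cons, List.map_append, List.map_map]
    rfl
  have hsubst : ∀ s : List ι, List.Forall₂ (fun t t' => t' ⊆ liftRules r t)
      (s.map tab) (s.map (fun i => liftRules r (tab i))) := by
    intro s
    induction s with
    | nil => exact List.Forall₂.nil
    | cons i s ih => exact List.Forall₂.cons (fun p hp => hp) ih
  refine ⟨NLet C r, inferInstance,
    ⟨fun o => Nout (emb o), fun o1 o2 hh => emb.injective (by simpa [Nout] using hh)⟩,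
    Option (Option ι), inferInstance, tab', ?_, Control', ?_, [Ntop], ?_⟩
  · intro x
    match x with
    | none => exact isTable_initRules r seed er
    | some none => exact isTable_graphT _
    | some (some i) => exact isTable_liftRules r (htab i)
  · exact sandwich_regular control hreg _ _ gdec
      (by rintro b hb; simp only [Set.mem_singleton_iff] at hb; subst hb; rfl)
  · ext w
    have hf : factorLang r k l L = {v | ∃ ws : List (List A), ws.length = r ∧ joinHashL ws ∈ L ∧ v = joinHashL ((ws.drop (k - 1)).take (l - k + 1))} := by
      unfold factorLang; exact if_pos hlr
    rw [hf]
    constructor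
    -- completeness
    · rintro ⟨ws, hlen, hmemL, rfl⟩
      rw [hLdef] at hmemL
      obtain ⟨s, hs, hder⟩ := hmemL
      have hws_ne : ws ≠ [] := by
        intro hh; rw [hh] at hlen; simp at hlen; omega
      have hsum : (((joinHashL ws).map emb).map (hzero emb)).sum = r - 1 := by
        rw [hzero_join_sum emb ws hws_ne, hlen]
      have hann : AnnRel r 0 er ((joinHashL ws).map emb)
          (cann r (hzero emb) 0 ((joinHashL ws).map emb)) := by
        have h1 := cann_annrel r (hzero emb) ((joinHashL ws).map emb) 0
        rw [Nat.zero_add, hsum] at h1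
        have e1 : fmin r 0 = 0 := Fin.ext (by simp [fmin])
        have e2 : fmin r (r - 1) = er := Fin.ext (by show min (r-1) r = r - 1; omega)
        rwa [e1, e2] at h1
      obtain ⟨seed', hannseed, hder'⟩ := lift_derives_rev hder hann
      rw [List.map_map] at hder'
      refine ⟨none :: (s.map (fun i => some (some i)) ++ [some none]),
        (hmemIff _).2 ⟨s, hs, rfl⟩, ?_⟩
      rw [hmap s]
      refine ⟨seed', ⟨[seed'], List.Forall₂.cons (Or.inr ⟨seed', hannseed, rfl⟩)
        List.Forall₂.nil, by simp⟩, ?_⟩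
      rw [derivesFrom_append]
      refine ⟨cann r (hzero emb) 0 ((joinHashL ws).map emb), ?_, ?_⟩
      · exact hder'
      · rw [derivesFrom_singleton, tableStep_graphT]
        have hcomp := finFun_cann_join (r := r) (k := k) (l := l) emb ws 0 hws_ne (by omega)
        rw [hcomp, keepJoin_eq k l hk hkl ws 0, Nat.sub_zero,
          show max 0 (k - 1) = k - 1 by omega, show l - (k - 1) = l - k + 1 by omega]
        rfl
    -- soundness
    · rintro ⟨rw, hrw, hder⟩
      obtain ⟨s, hs, rfl⟩ := (hmemIff rw).1 hrw
      rw [hmap s] at hder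
      obtain ⟨u₀, hstep0, hder1⟩ := hder
      obtain ⟨mform, hdermid, hfin⟩ := (derivesFrom_append _ _ _ _).1 hder1
      rw [derivesFrom_singleton, tableStep_graphT] at hfin
      have hnb_out : Nbot ∉ (mform.map (finFun r k l emb)).flatten := by
        rw [← hfin]
        exact nbot_not_mem_map_out emb w
      obtain ⟨x, v₂, hxrule, hstep₂, hu₀⟩ := tableStep_cons_inv hstep0
      rw [tableStep_nil] at hstep₂
      subst hstep₂
      rw [List.append_nil] at hu₀
      subst hu₀
      rcases hxrule with hx | ⟨x', hannx, heqx⟩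
      · exfalso
        have hxv : u₀ = [Nbot] := hx
        have hbmem : Nbot ∈ u₀ := by simp [hxv]
        have hbm : Nbot ∈ mform := by
          refine botClosed_derives ?_ hbmem hdermid
          exact botClosed_of_forall₂ (hsubst s)
        exact hnb_out (bot_in_finFun_flatten emb hbm)
      · obtain ⟨_, hxw⟩ := Prod.mk.inj heqx
        subst hxw
        rcases lift_derives (hsubst s) hannx hdermid with hbot | ⟨v, hderv, hannv⟩
        · exact absurd (bot_in_finFun_flatten emb hbot) hnb_out
        · obtain ⟨w₀, rfl⟩ := ann_finfree_range emb hannv hnb_out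
          have hw₀L : w₀ ∈ L := by rw [hLdef]; exact ⟨s, hs, hderv⟩
          obtain ⟨ws, hlen, hws⟩ := hL w₀ hw₀L
          subst hws
          have hws_ne : ws ≠ [] := by
            intro hh; rw [hh] at hlen; simp at hlen; omega
          have hout := finFun_ann_join emb ws hannv hnb_out hws_ne
          refine ⟨ws, hlen, hw₀L, ?_⟩
          have hinj : Function.Injective (fun o : Option A => (Nout (emb o) : NLet C r)) := by
            intro o1 o2 hh
            exact emb.injective (by simpa [Nout] using hh)
          apply List.map_injective_iff.2 hinj
          erw [hfin]
          rw [hout, Fin.val_zero, keepJoin_eq k l hk hkl ws 0, Nat.sub_zero,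
            show max 0 (k - 1) = k - 1 by omega, show l - (k - 1) = l - k + 1 by omega]

end FactorMain
section FactorMainD

theorem strat_finite {X : Type} [Finite X] {T : Set (X × List X)} (hT : T.Finite) :
    Finite {σ : X → List X // ∀ x, (x, σ x) ∈ T} := by
  have hfib : ∀ x : X, Finite {w : List X // (x, w) ∈ T} := by
    intro x
    have hsub : {w : List X | (x, w) ∈ T} ⊆ Prod.snd '' T := fun w hw => ⟨(x, w), hw, rfl⟩
    exact ((hT.image Prod.snd).subset hsub).to_subtype
  exact Finite.of_injective
    (fun σ : {σ : X → List X // ∀ x, (x, σ x) ∈ T} =>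
      (fun x => (⟨σ.1 x, σ.2 x⟩ : {w // (x, w) ∈ T})))
    (fun σ τ h => Subtype.ext (funext fun x => congrArg Subtype.val (congrFun h x)))

theorem factor_EDT0L {A : Type} (r k l : ℕ) (hk : 1 ≤ k) (hkl : k ≤ l) (hlr : l ≤ r)
    (L : Language (Option A))
    (hL : ∀ u ∈ L, ∃ ws : List (List A), ws.length = r ∧ u = joinHashL ws)
    (h : IsEDT0L L) : IsEDT0L (factorLang r k l L) := by
  classical
  obtain ⟨C, finC, emb, ι, finι, tab, htab, control, hreg, seed, hLdef⟩ := h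
  have hr1 : 1 ≤ r := le_trans (hk.trans hkl) hlr
  haveI := Fintype.ofFinite ι
  set er : Fin (r + 1) := ⟨r - 1, by omega⟩ with her
  -- deterministic right-hand sides
  let rhs : ι → C → List C := fun i c => ((htab i).2 c).choose
  have hrhs : ∀ i c, (c, rhs i c) ∈ tab i := fun i c => ((htab i).2 c).choose_spec.1
  have huni : ∀ i c v, (c, v) ∈ tab i → v = rhs i c :=
    fun i c v hv => ((htab i).2 c).choose_spec.2 v hv
  have htabeq : ∀ i, tab i = graphT (rhs i) := by
    intro i
    ext ⟨c, v⟩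
    rw [mem_graphT]
    exact ⟨fun hv => huni i c v hv, fun hv => hv ▸ hrhs i c⟩
  -- auxiliary types
  let InitS : Type := {σ : NLet C r → List (NLet C r) // ∀ x, (x, σ x) ∈ initRules r seed er}
  haveI hInitFin : Finite InitS := strat_finite (isTable_initRules r seed er).1
  haveI hStratFin : ∀ i, Finite (StratT r (tab i)) :=
    fun i => stratT_finite (liftRules_finite r (htab i).1.1)
  let Sig : Type := (i : ι) × StratT r (tab i)
  let ι'' : Type := (InitS ⊕ Sig) ⊕ Unit
  let tabD : ι'' → Set (NLet C r × List (NLet C r)) := fun x =>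
    match x with
    | Sum.inl (Sum.inl σ0) => graphT σ0.1
    | Sum.inl (Sum.inr p) => graphT p.2.1
    | Sum.inr _ => graphT (finFun r k l emb)
  let gdec : ι'' → Option ι := fun b =>
    match b with
    | Sum.inl (Sum.inr p) => some p.1
    | _ => none
  let ControlD : Language ι'' :=
    {w : List ι'' | ∃ x ∈ {b : ι'' | ∃ σ0 : InitS, b = Sum.inl (Sum.inl σ0)},
      ∃ y ∈ ({Sum.inr ()} : Set ι''), ∃ mb s, s ∈ control ∧
      List.Forall₂ (fun b c => gdec b = some c) mb s ∧ w = x :: (mb ++ [y])}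
  have hdecode := forall₂_decode_iff gdec
    (fun p : Sig => (Sum.inl (Sum.inr p) : ι'')) (fun p => p.1) (fun p => rfl)
    (by
      intro b c hbc
      match b with
      | Sum.inl (Sum.inl σ0) => exact absurd hbc (by simp [gdec])
      | Sum.inr u => exact absurd hbc (by simp [gdec])
      | Sum.inl (Sum.inr p) => exact ⟨p, rfl, by simpa [gdec] using hbc⟩)
  have hmemIff : ∀ w, w ∈ ControlD ↔
      ∃ s ∈ control, ∃ σ0 : InitS, ∃ m : List Sig, m.map Sigma.fst = s ∧
        w = Sum.inl (Sum.inl σ0) ::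
          (m.map (fun p => Sum.inl (Sum.inr p)) ++ [Sum.inr ()]) := by
    intro w
    constructor
    · rintro ⟨x, ⟨σ0, rfl⟩, y, hy, mb, s, hs, hf, rfl⟩
      obtain ⟨m, rfl, rfl⟩ := (hdecode mb s).1 hf
      simp only [Set.mem_singleton_iff] at hy
      subst hy
      exact ⟨m.map Sigma.fst, hs, σ0, m, rfl, rfl⟩
    · rintro ⟨s, hs, σ0, m, hm, rfl⟩
      exact ⟨_, ⟨σ0, rfl⟩, Sum.inr (), rfl, m.map (fun p => Sum.inl (Sum.inr p)), s, hs,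
        (hdecode _ s).2 ⟨m, rfl, hm⟩, rfl⟩
  have hmapD : ∀ (σ0 : InitS) (m : List Sig),
      (Sum.inl (Sum.inl σ0) ::
        (m.map (fun p => Sum.inl (Sum.inr p)) ++ [Sum.inr ()])).map tabD =
      graphT σ0.1 ::
        (m.map (fun p => graphT p.2.1) ++ [graphT (finFun r k l emb)]) := by
    intro σ0 m
    simp only [List.map_cons, List.map_append, List.map_map]
    rfl
  have hsubD : ∀ m : List Sig, List.Forall₂ (fun t t' => t' ⊆ liftRules r t)
      ((m.map Sigma.fst).map tab) (m.map (fun p => graphT p.2.1)) := by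
    intro m
    induction m with
    | nil => exact List.Forall₂.nil
    | cons p m ih =>
      refine List.Forall₂.cons ?_ ih
      rintro ⟨qa, qb⟩ hq
      have hq' : qb = p.2.1 qa := hq
      subst hq'
      exact p.2.2 qa
  refine ⟨NLet C r, inferInstance,
    ⟨fun o => Nout (emb o), fun o1 o2 hh => emb.injective (by simpa [Nout] using hh)⟩,
    ι'', inferInstance, tabD, ?_, ControlD, ?_, [Ntop], ?_⟩
  · intro x
    match x with
    | Sum.inl (Sum.inl σ0) => exact ⟨isTable_graphT _, isDetTable_graphT _⟩
    | Sum.inl (Sum.inr p) => exact ⟨isTable_graphT _, isDetTable_graphT _⟩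
    | Sum.inr u => exact ⟨isTable_graphT _, isDetTable_graphT _⟩
  · exact sandwich_regular control hreg _ _ gdec
      (by rintro b hb; simp only [Set.mem_singleton_iff] at hb; subst hb; rfl)
  · ext w
    have hf : factorLang r k l L = {v | ∃ ws : List (List A), ws.length = r ∧ joinHashL ws ∈ L ∧ v = joinHashL ((ws.drop (k - 1)).take (l - k + 1))} := by
      unfold factorLang; exact if_pos hlr
    rw [hf]
    constructor
    -- completeness
    · rintro ⟨ws, hlen, hmemL, rfl⟩
      rw [hLdef] at hmemL
      obtain ⟨s, hs, hder⟩ := hmemL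
      have hws_ne : ws ≠ [] := by
        intro hh; rw [hh] at hlen; simp at hlen; omega
      have hsum : (((joinHashL ws).map emb).map (hzero emb)).sum = r - 1 := by
        rw [hzero_join_sum emb ws hws_ne, hlen]
      have hfinal : deriveW rhs s seed = (joinHashL ws).map emb :=
        ((derivesFrom_det tab rhs htabeq s seed _).1 hder).symm
      -- initial strategy
      let σ0f : NLet C r → List (NLet C r) := fun x =>
        if x = Ntop then cann r (hcnt (hzero emb) rhs s) 0 seed else [Nbot]
      have hseedsum : (seed.map (hcnt (hzero emb) rhs s)).sum = r - 1 := by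
        have h1 := deriveW_sum (hzero emb) rhs s seed
        rw [hfinal, hsum] at h1
        exact h1.symm
      have hannseed : AnnRel r 0 er seed (cann r (hcnt (hzero emb) rhs s) 0 seed) := by
        have h1 := cann_annrel r (hcnt (hzero emb) rhs s) seed 0
        rw [Nat.zero_add, hseedsum] at h1
        have e1 : fmin r 0 = 0 := Fin.ext (by simp [fmin])
        have e2 : fmin r (r - 1) = er := Fin.ext (by show min (r-1) r = r - 1; omega)
        rwa [e1, e2] at h1
      have hσ0val : ∀ x, (x, σ0f x) ∈ initRules r seed er := by
        intro x
        by_cases hx : x = Ntop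
        · subst hx
          have hv : σ0f Ntop = cann r (hcnt (hzero emb) rhs s) 0 seed := if_pos rfl
          rw [hv]
          exact Or.inr ⟨_, hannseed, rfl⟩
        · have hv : σ0f x = [Nbot] := if_neg hx
          rw [hv]
          exact Or.inl rfl
      obtain ⟨m, hmfst, hd⟩ := derives_lift_det (r := r) emb tab rhs hrhs s seed 0
        (by rw [hfinal]; omega)
      refine ⟨Sum.inl (Sum.inl ⟨σ0f, hσ0val⟩) ::
        (m.map (fun p => Sum.inl (Sum.inr p)) ++ [Sum.inr ()]),
        (hmemIff _).2 ⟨s, hs, ⟨σ0f, hσ0val⟩, m, hmfst, rfl⟩, ?_⟩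
      rw [hmapD]
      refine ⟨cann r (hcnt (hzero emb) rhs s) 0 seed, ?_, ?_⟩
      · rw [tableStep_graphT]
        show _ = (σ0f Ntop :: List.map σ0f []).flatten
        have hv : σ0f Ntop = cann r (hcnt (hzero emb) rhs s) 0 seed := if_pos rfl
        rw [hv]
        simp
      · rw [derivesFrom_append]
        refine ⟨cann r (hzero emb) 0 (deriveW rhs s seed), hd, ?_⟩
        rw [derivesFrom_singleton, tableStep_graphT, hfinal]
        have hcomp := finFun_cann_join (r := r) (k := k) (l := l) emb ws 0 hws_ne (by omega)
        rw [hcomp, keepJoin_eq k l hk hkl ws 0, Nat.sub_zero,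
          show max 0 (k - 1) = k - 1 by omega, show l - (k - 1) = l - k + 1 by omega]
        rfl
    -- soundness
    · rintro ⟨rw, hrw, hder⟩
      obtain ⟨s, hs, σ0, m, hmfst, rfl⟩ := (hmemIff rw).1 hrw
      rw [hmapD] at hder
      obtain ⟨u₀, hstep0, hder1⟩ := hder
      obtain ⟨mform, hdermid, hfin⟩ := (derivesFrom_append _ _ _ _).1 hder1
      rw [derivesFrom_singleton, tableStep_graphT] at hfin
      have hnb_out : Nbot ∉ (mform.map (finFun r k l emb)).flatten := by
        rw [← hfin]
        exact nbot_not_mem_map_out emb w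
      rw [tableStep_graphT] at hstep0
      have hu₀ : u₀ = σ0.1 Ntop := by simpa using hstep0
      subst hu₀
      rcases σ0.2 Ntop with hx | ⟨x', hannx, heqx⟩
      · exfalso
        have hxv : σ0.1 Ntop = [Nbot] := hx
        have hbmem : Nbot ∈ σ0.1 Ntop := by simp [hxv]
        have hbm : Nbot ∈ mform :=
          botClosed_derives (botClosed_of_forall₂ (hsubD m)) hbmem hdermid
        exact hnb_out (bot_in_finFun_flatten emb hbm)
      · have hxw : σ0.1 Ntop = x' := (Prod.mk.inj heqx).2
        rw [hxw] at hdermid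
        rcases lift_derives (hsubD m) hannx hdermid with hbot | ⟨v, hderv, hannv⟩
        · exact absurd (bot_in_finFun_flatten emb hbot) hnb_out
        · obtain ⟨w₀, rfl⟩ := ann_finfree_range emb hannv hnb_out
          have hw₀L : w₀ ∈ L := by
            rw [hLdef]
            rw [hmfst] at hderv
            exact ⟨s, hs, hderv⟩
          obtain ⟨ws, hlen, hws⟩ := hL w₀ hw₀L
          subst hws
          have hws_ne : ws ≠ [] := by
            intro hh; rw [hh] at hlen; simp at hlen; omega
          have hout := finFun_ann_join emb ws hannv hnb_out hws_ne
          refine ⟨ws, hlen, hw₀L, ?_⟩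
          have hinj : Function.Injective (fun o : Option A => (Nout (emb o) : NLet C r)) := by
            intro o1 o2 hh
            exact emb.injective (by simpa [Nout] using hh)
          apply List.map_injective_iff.2 hinj
          erw [hfin]
          rw [hout, Fin.val_zero, keepJoin_eq k l hk hkl ws 0, Nat.sub_zero,
            show max 0 (k - 1) = k - 1 by omega, show l - (k - 1) = l - k + 1 by omega]

end FactorMainD
/-- (Projection onto a factor.) If every word of
`L` has the form `u₁#…#u_r`, then the language `L_{k,ℓ}` of factors
`u_k#…#u_ℓ` (for `1 ≤ k ≤ ℓ`) is ET0L whenever `L` is, and EDT0L whenever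
`L` is. -/
theorem factorLang_ET0L_EDT0L {A : Type} (r k l : ℕ) (hk : 1 ≤ k) (hkl : k ≤ l)
    (L : Language (Option A))
    (hL : ∀ u ∈ L, ∃ ws : List (List A), ws.length = r ∧ u = joinHashL ws) :
    (IsET0L L → IsET0L (factorLang r k l L)) ∧
    (IsEDT0L L → IsEDT0L (factorLang r k l L)) := by
  constructor
  · intro h
    by_cases hlr : l ≤ r
    · exact factor_ET0L r k l hk hkl hlr L hL h
    · obtain ⟨C, finC, emb, ι, finι, tab, htab, control, hreg, seed, hLdef⟩ := h
      refine ⟨C, finC, emb, ι, finι, tab, htab, 0, empty_regular, seed, ?_⟩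
      have hf : factorLang r k l L = {v | False} := by
        unfold factorLang; exact if_neg hlr
      rw [hf]
      ext w
      constructor
      · intro hw
        exact hw.elim
      · rintro ⟨rr, hrr, -⟩
        exact hrr
  · intro h
    by_cases hlr : l ≤ r
    · exact factor_EDT0L r k l hk hkl hlr L hL h
    · obtain ⟨C, finC, emb, ι, finι, tab, htab, control, hreg, seed, hLdef⟩ := h
      refine ⟨C, finC, emb, ι, finι, tab, htab, 0, empty_regular, seed, ?_⟩
      have hf : factorLang r k l L = {v | False} := by
        unfold factorLang; exact if_neg hlr
      rw [hf]
      ext w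
      constructor
      · intro hw
        exact hw.elim
      · rintro ⟨rr, hrr, -⟩
        exact hrr

end EqHyp
end
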